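/- arXiv:math-ph/0503052 — 5 statements merged into one kernel-verified Lean document; each statement's English description precedes it below -/
import Mathlib

section
/- Mehta's integration lemma for the Christoffel–Darboux kernel: for every 1 ≤ k ≤ N and all fixed x_1,…,x_{k−1} ∈ ℝ, ∫_ℝ det( K(x_i, x_j) )_{1≤i,j≤k} · w(x_k) dx_k = (N − k + 1) · det( K(x_i, x_j) )_{1≤i,j≤k−1}, where for k = 1 the determinant on the right-hand side is the empty determinant equal to 1. -/
open MeasureTheory Polynomial Filter Asymptotics Real


private lemma aux_ratio (q P : Polynomial ℝ) (hd : 2 ≤ P.natDegree) (hl : 0 < P.leadingCoeff) :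
    Tendsto (fun t => q.eval t * Real.exp (-P.eval t) / Real.exp (-t)) atTop (nhds 0) := by
  have hPne : P ≠ 0 := fun h0 => by simp [h0] at hl
  have hdegP : 0 < P.degree := by
    rw [Polynomial.degree_eq_natDegree hPne]
    exact_mod_cast lt_of_lt_of_le (by norm_num) hd
  have hdlt : (Polynomial.C (2:ℝ) * Polynomial.X).degree < P.degree := by
    rw [Polynomial.degree_C_mul_X (by norm_num : (2:ℝ) ≠ 0),
      Polynomial.degree_eq_natDegree hPne]
    exact_mod_cast lt_of_lt_of_le (by norm_num) hd
  set W : Polynomial ℝ := P - Polynomial.C 2 * Polynomial.X with hWdef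
  have hWlead : W.leadingCoeff = P.leadingCoeff := Polynomial.leadingCoeff_sub_of_degree_lt hdlt
  have hWdeg : W.degree = P.degree := Polynomial.degree_sub_eq_left_of_degree_lt hdlt
  have hWtop : Tendsto (fun t => W.eval t) atTop atTop :=
    Polynomial.tendsto_atTop_of_leadingCoeff_nonneg W (hWdeg ▸ hdegP) (hWlead ▸ hl.le)
  have hexp : Tendsto (fun t => Real.exp (-W.eval t)) atTop (nhds 0) :=
    Real.tendsto_exp_atBot.comp (tendsto_neg_atBot_iff.mpr hWtop)
  have hq : ∀ᶠ t in atTop, |q.eval t| ≤ Real.exp t := by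
    have := (q.tendsto_div_exp_atTop).eventually (eventually_le_nhds (by norm_num : (0:ℝ) < 1))
    filter_upwards [this, (q.tendsto_div_exp_atTop).eventually
      (eventually_ge_nhds (by norm_num : (-1:ℝ) < 0))] with t h1 h2
    have he := Real.exp_pos t
    rw [div_le_one he] at h1
    rw [le_div_iff₀ he] at h2
    rw [abs_le]
    constructor <;> linarith
  refine squeeze_zero_norm' ?_ hexp
  filter_upwards [hq] with t ht
  have he : Real.exp (-t) > 0 := Real.exp_pos _
  rw [Real.norm_eq_abs, abs_div, abs_of_pos he, abs_mul, abs_of_pos (Real.exp_pos (-P.eval t))]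
  rw [div_le_iff₀ he]
  calc |q.eval t| * Real.exp (-P.eval t) ≤ Real.exp t * Real.exp (-P.eval t) := by
        exact mul_le_mul_of_nonneg_right ht (Real.exp_pos _).le
    _ = Real.exp (-W.eval t) * Real.exp (-t) := by
        rw [← Real.exp_add, ← Real.exp_add]
        congr 1
        rw [hWdef]; simp only [Polynomial.eval_sub, Polynomial.eval_mul, Polynomial.eval_C, Polynomial.eval_X]
        ring

private lemma integrable_poly_mul_exp (q P : Polynomial ℝ) (hd : 2 ≤ P.natDegree)
    (hev : Even P.natDegree) (hl : 0 < P.leadingCoeff) :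
    Integrable (fun t => q.eval t * Real.exp (-P.eval t)) := by
  have hcont : Continuous fun t => q.eval t * Real.exp (-P.eval t) :=
    (q.continuous_aeval).mul (Real.continuous_exp.comp (P.continuous_aeval).neg)
  have hatTop : (fun t => q.eval t * Real.exp (-P.eval t)) =O[atTop] fun t => Real.exp (-t) := by
    refine IsLittleO.isBigO ?_
    rw [isLittleO_iff_tendsto' (by filter_upwards with t ht; exact absurd ht (Real.exp_ne_zero _))]
    exact aux_ratio q P hd hl
  have hatBot : (fun t => q.eval t * Real.exp (-P.eval t)) =O[atBot] Real.exp := by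
    refine IsLittleO.isBigO ?_
    rw [isLittleO_iff_tendsto' (by filter_upwards with t ht; exact absurd ht (Real.exp_ne_zero _))]
    set q' := q.comp (-Polynomial.X) with hq'
    set P' := P.comp (-Polynomial.X) with hP'
    have hnX : (-Polynomial.X : Polynomial ℝ).natDegree = 1 := by simp
    have hdP' : 2 ≤ P'.natDegree := by
      rw [hP', Polynomial.natDegree_comp, hnX, mul_one]; exact hd
    have hlP' : 0 < P'.leadingCoeff := by
      rw [hP', Polynomial.leadingCoeff_comp (by rw [hnX]; norm_num)]
      have : (-Polynomial.X : Polynomial ℝ).leadingCoeff = -1 := by simp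
      rw [this, hev.neg_one_pow]
      simpa using hl
    have := (aux_ratio q' P' hdP' hlP').comp tendsto_neg_atBot_atTop
    convert this using 2 with t
    simp only [Function.comp_apply, hq', hP', Polynomial.eval_comp, Polynomial.eval_neg,
      Polynomial.eval_X, neg_neg]
  refine (hcont.locallyIntegrable).integrable_of_isBigO_atBot_atTop hatBot
    ⟨Set.Iic 0, Iic_mem_atBot 0, integrableOn_exp_Iic 0⟩ hatTop
    ⟨Set.Ioi 0, Ioi_mem_atTop 0, by simpa using exp_neg_integrableOn_Ioi 0 one_pos⟩

open MeasureTheory Polynomial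

/-- Mehta's integration lemma, stated with `k = k' + 1` so that `1 ≤ k ≤ N` and
`x_1, …, x_{k-1}` are the fixed points `x : Fin k' → ℝ`; the last variable is integrated out. -/
theorem mehta_integration_lemma
    (N : ℕ) (hN : 1 ≤ N) (V : Polynomial ℝ)
    (hVdeg : 2 ≤ V.natDegree) (hVeven : Even V.natDegree) (hVlead : 0 < V.leadingCoeff)
    (w : ℝ → ℝ) (hw : ∀ x : ℝ, w x = Real.exp (-(N : ℝ) * V.eval x))
    (p : ℕ → Polynomial ℝ) (hmonic : ∀ n, (p n).Monic) (hdeg : ∀ n, (p n).natDegree = n)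
    (h : ℕ → ℝ) (hpos : ∀ n, 0 < h n)
    (horth : ∀ n m : ℕ,
      (∫ x : ℝ, (p n).eval x * (p m).eval x * w x) = if n = m then h n else 0)
    (K : ℝ → ℝ → ℝ)
    (hK : ∀ x y : ℝ, K x y = ∑ n ∈ Finset.range N, (p n).eval x * (p n).eval y / h n)
    (k' : ℕ) (hk : k' + 1 ≤ N) (x : Fin k' → ℝ) :
    (∫ t : ℝ,
        Matrix.det (Matrix.of fun i j : Fin (k' + 1) =>
          K ((Fin.snoc x t : Fin (k' + 1) → ℝ) i) ((Fin.snoc x t : Fin (k' + 1) → ℝ) j)) * w t)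
      = ((N : ℝ) - k')
          * Matrix.det (Matrix.of fun i j : Fin k' => K (x i) (x j)) := by
  classical
  -- the weight as exp of a polynomial
  set P : Polynomial ℝ := Polynomial.C (N : ℝ) * V with hPdef
  have hNne : (N : ℝ) ≠ 0 := Nat.cast_ne_zero.mpr (by omega)
  have hw' : ∀ t, w t = Real.exp (-P.eval t) := by
    intro t; rw [hw]; congr 1; simp [hPdef]
  have hPd : 2 ≤ P.natDegree := by
    rw [hPdef, Polynomial.natDegree_C_mul hNne]; exact hVdeg
  have hPev : Even P.natDegree := by
    rw [hPdef, Polynomial.natDegree_C_mul hNne]; exact hVeven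
  have hPl : 0 < P.leadingCoeff := by
    rw [hPdef, Polynomial.leadingCoeff_mul, Polynomial.leadingCoeff_C]
    exact mul_pos (by exact_mod_cast Nat.pos_of_ne_zero (by omega)) hVlead
  -- integrability of polynomial functions against w
  have hint : ∀ q : Polynomial ℝ, Integrable (fun t => q.eval t * w t) := by
    intro q
    have := integrable_poly_mul_exp q P hPd hPev hPl
    simpa only [hw'] using this
  have hintP : ∀ f : ℝ → ℝ, (∃ q : Polynomial ℝ, ∀ t, f t = q.eval t) →
      Integrable (fun t => f t * w t) := by
    rintro f ⟨q, hq⟩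
    simpa only [hq] using hint q
  -- basic facts about K
  have hsymm : ∀ a b : ℝ, K a b = K b a := by
    intro a b; rw [hK, hK]
    exact Finset.sum_congr rfl fun n _ => by ring
  have hKpoly_l : ∀ a : ℝ, ∃ q : Polynomial ℝ, ∀ t, K a t = q.eval t := by
    intro a
    refine ⟨∑ n ∈ Finset.range N, Polynomial.C ((p n).eval a / h n) * p n, fun t => ?_⟩
    rw [hK, Polynomial.eval_finset_sum]
    exact Finset.sum_congr rfl fun n _ => by
      simp only [Polynomial.eval_mul, Polynomial.eval_C]; ring
  have hKpoly_r : ∀ b : ℝ, ∃ q : Polynomial ℝ, ∀ t, K t b = q.eval t := by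
    intro b
    obtain ⟨q, hq⟩ := hKpoly_l b
    exact ⟨q, fun t => (hsymm t b).trans (hq t)⟩
  have hKpoly_d : ∃ q : Polynomial ℝ, ∀ t, K t t = q.eval t := by
    refine ⟨∑ n ∈ Finset.range N, Polynomial.C (1 / h n) * (p n * p n), fun t => ?_⟩
    rw [hK, Polynomial.eval_finset_sum]
    exact Finset.sum_congr rfl fun n _ => by
      simp only [Polynomial.eval_mul, Polynomial.eval_C]; ring
  -- integrability of products of p's against w
  have hI : ∀ n m : ℕ, Integrable (fun t => (p n).eval t * (p m).eval t * w t) := by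
    intro n m
    simpa only [Polynomial.eval_mul] using hint (p n * p m)
  -- the reproducing property
  have hrep : ∀ a b : ℝ, (∫ t : ℝ, (K a t * K t b) * w t) = K a b := by
    intro a b
    have h1 : ∀ t : ℝ, (K a t * K t b) * w t
        = ∑ n ∈ Finset.range N, ∑ m ∈ Finset.range N,
            ((p n).eval a * (p m).eval b / (h n * h m)) *
              ((p n).eval t * (p m).eval t * w t) := by
      intro t
      rw [hK a t, hK t b, Finset.sum_mul_sum, Finset.sum_mul]
      refine Finset.sum_congr rfl fun n _ => ?_
      rw [Finset.sum_mul]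
      exact Finset.sum_congr rfl fun m _ => by ring
    calc (∫ t : ℝ, (K a t * K t b) * w t)
        = ∑ n ∈ Finset.range N, ∑ m ∈ Finset.range N,
            ((p n).eval a * (p m).eval b / (h n * h m)) * (if n = m then h n else 0) := by
          simp only [h1]
          rw [integral_finset_sum _ (fun n _ =>
            integrable_finset_sum _ (fun m _ => (hI n m).const_mul _))]
          refine Finset.sum_congr rfl fun n _ => ?_
          rw [integral_finset_sum _ (fun m _ => (hI n m).const_mul _)]
          refine Finset.sum_congr rfl fun m _ => ?_
          rw [integral_const_mul, horth n m]
      _ = K a b := by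
          rw [hK]
          refine Finset.sum_congr rfl fun n hn => ?_
          simp only [mul_ite, mul_zero]
          rw [Finset.sum_ite_eq (Finset.range N) n
            (fun m => (p n).eval a * (p m).eval b / (h n * h m) * h n), if_pos hn]
          have hne := (hpos n).ne'
          field_simp
  -- the trace property
  have htr : (∫ t : ℝ, K t t * w t) = (N : ℝ) := by
    have h1 : ∀ t : ℝ, K t t * w t
        = ∑ n ∈ Finset.range N, (1 / h n) * ((p n).eval t * (p n).eval t * w t) := by
      intro t
      rw [hK, Finset.sum_mul]
      exact Finset.sum_congr rfl fun n _ => by ring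
    simp only [h1]
    rw [integral_finset_sum _ (fun n _ => (hI n n).const_mul _)]
    have : ∀ n ∈ Finset.range N,
        (∫ t : ℝ, (1 / h n) * ((p n).eval t * (p n).eval t * w t)) = 1 := by
      intro n _
      rw [integral_const_mul, horth n n, if_pos rfl]
      exact one_div_mul_cancel (hpos n).ne'
    rw [Finset.sum_congr rfl this, Finset.sum_const, Finset.card_range, nsmul_eq_mul, mul_one]
  -- expand the determinant over permutations, after reindexing snoc to cons
  have hdetAB : ∀ t : ℝ,
      Matrix.det (Matrix.of fun i j : Fin (k' + 1) =>
        K ((Fin.snoc x t : Fin (k' + 1) → ℝ) i) ((Fin.snoc x t : Fin (k' + 1) → ℝ) j))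
      = ∑ σ : Equiv.Perm (Fin (k' + 1)),
          ((Equiv.Perm.sign σ : ℤ) : ℝ) *
            ∏ i, K ((Fin.cons t x : Fin (k' + 1) → ℝ) (σ i))
              ((Fin.cons t x : Fin (k' + 1) → ℝ) i) := by
    intro t
    rw [show (Matrix.of fun i j : Fin (k' + 1) =>
        K ((Fin.snoc x t : Fin (k' + 1) → ℝ) i) ((Fin.snoc x t : Fin (k' + 1) → ℝ) j))
      = (Matrix.of fun i j : Fin (k' + 1) =>
          K ((Fin.cons t x : Fin (k' + 1) → ℝ) i)
            ((Fin.cons t x : Fin (k' + 1) → ℝ) j)).submatrix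
          (finRotate (k' + 1)) (finRotate (k' + 1)) from by
        ext i j
        simp [Fin.snoc_eq_cons_rotate]]
    rw [Matrix.det_submatrix_equiv_self, Matrix.det_apply']
    rfl
  -- each factor of the product is a polynomial function of t
  have hfac : ∀ (σ : Equiv.Perm (Fin (k' + 1))) (i : Fin (k' + 1)),
      ∃ q : Polynomial ℝ, ∀ t : ℝ,
        K ((Fin.cons t x : Fin (k' + 1) → ℝ) (σ i)) ((Fin.cons t x : Fin (k' + 1) → ℝ) i)
          = q.eval t := by
    intro σ i
    rcases Fin.eq_zero_or_eq_succ (σ i) with h1 | ⟨a, ha⟩ <;>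
      rcases Fin.eq_zero_or_eq_succ i with h2 | ⟨b, hb⟩
    · rw [h1, h2]; simpa using hKpoly_d
    · rw [h1, hb]; simpa using hKpoly_r (x b)
    · rw [ha, h2]; simpa using hKpoly_l (x a)
    · rw [ha, hb]
      exact ⟨Polynomial.C (K (x a) (x b)), fun t => by simp⟩
  have hFpoly : ∀ σ : Equiv.Perm (Fin (k' + 1)),
      ∃ q : Polynomial ℝ, ∀ t : ℝ,
        (∏ i, K ((Fin.cons t x : Fin (k' + 1) → ℝ) (σ i))
          ((Fin.cons t x : Fin (k' + 1) → ℝ) i)) = q.eval t := by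
    intro σ
    choose Q hQ using hfac σ
    refine ⟨∏ i, Q i, fun t => ?_⟩
    rw [Polynomial.eval_prod]
    exact Finset.prod_congr rfl fun i _ => hQ i t
  have hFint : ∀ σ : Equiv.Perm (Fin (k' + 1)),
      Integrable (fun t => (∏ i, K ((Fin.cons t x : Fin (k' + 1) → ℝ) (σ i))
        ((Fin.cons t x : Fin (k' + 1) → ℝ) i)) * w t) :=
    fun σ => hintP _ (hFpoly σ)
  -- pull the sum over permutations out of the integral
  have step1 : (∫ t : ℝ,
        Matrix.det (Matrix.of fun i j : Fin (k' + 1) =>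
          K ((Fin.snoc x t : Fin (k' + 1) → ℝ) i) ((Fin.snoc x t : Fin (k' + 1) → ℝ) j)) * w t)
      = ∑ σ : Equiv.Perm (Fin (k' + 1)), ((Equiv.Perm.sign σ : ℤ) : ℝ) *
          ∫ t : ℝ, (∏ i, K ((Fin.cons t x : Fin (k' + 1) → ℝ) (σ i))
            ((Fin.cons t x : Fin (k' + 1) → ℝ) i)) * w t := by
    simp only [hdetAB, Finset.sum_mul, mul_assoc]
    rw [integral_finset_sum _ (fun σ _ => ((hFint σ).const_mul _))]
    exact Finset.sum_congr rfl fun σ _ => integral_const_mul _ _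
  -- value of the integral for permutations fixing the first index
  have hzero : ∀ τ : Equiv.Perm (Fin k'),
      ((Equiv.Perm.sign (Equiv.Perm.decomposeFin.symm (0, τ)) : ℤ) : ℝ) *
        ∫ t : ℝ, (∏ i, K ((Fin.cons t x : Fin (k' + 1) → ℝ)
            ((Equiv.Perm.decomposeFin.symm (0, τ)) i))
          ((Fin.cons t x : Fin (k' + 1) → ℝ) i)) * w t
      = (N : ℝ) * (((Equiv.Perm.sign τ : ℤ) : ℝ) * ∏ j, K (x (τ j)) (x j)) := by
    intro τ
    have hprod : ∀ t : ℝ, (∏ i, K ((Fin.cons t x : Fin (k' + 1) → ℝ)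
            ((Equiv.Perm.decomposeFin.symm (0, τ)) i))
          ((Fin.cons t x : Fin (k' + 1) → ℝ) i))
        = K t t * ∏ j, K (x (τ j)) (x j) := by
      intro t
      rw [Fin.prod_univ_succ]
      have h0 : K ((Fin.cons t x : Fin (k' + 1) → ℝ)
            ((Equiv.Perm.decomposeFin.symm ((0 : Fin (k' + 1)), τ)) 0))
          ((Fin.cons t x : Fin (k' + 1) → ℝ) 0) = K t t := by
        rw [Equiv.Perm.decomposeFin_symm_apply_zero]; simp
      have hrest : ∀ j ∈ (Finset.univ : Finset (Fin k')),
          K ((Fin.cons t x : Fin (k' + 1) → ℝ)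
              ((Equiv.Perm.decomposeFin.symm ((0 : Fin (k' + 1)), τ)) j.succ))
            ((Fin.cons t x : Fin (k' + 1) → ℝ) j.succ) = K (x (τ j)) (x j) := by
        intro j _
        rw [Equiv.Perm.decomposeFin_symm_apply_succ]
        simp
      rw [h0, Finset.prod_congr rfl hrest]
    simp only [hprod]
    rw [show (fun t => (K t t * ∏ j, K (x (τ j)) (x j)) * w t)
        = fun t => (∏ j, K (x (τ j)) (x j)) * (K t t * w t) from funext fun t => by ring]
    rw [integral_const_mul, htr, Equiv.Perm.decomposeFin.symm_sign, if_pos rfl]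
    push_cast
    ring
  -- value of the integral for permutations moving the first index
  have hsucc : ∀ (j0 : Fin k') (τ : Equiv.Perm (Fin k')),
      ((Equiv.Perm.sign (Equiv.Perm.decomposeFin.symm (j0.succ, τ)) : ℤ) : ℝ) *
        ∫ t : ℝ, (∏ i, K ((Fin.cons t x : Fin (k' + 1) → ℝ)
            ((Equiv.Perm.decomposeFin.symm (j0.succ, τ)) i))
          ((Fin.cons t x : Fin (k' + 1) → ℝ) i)) * w t
      = -(((Equiv.Perm.sign τ : ℤ) : ℝ) * ∏ j, K (x (τ j)) (x j)) := by
    intro j0 τ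
    set m : Fin k' := τ⁻¹ j0 with hm
    have hτm : τ m = j0 := Equiv.apply_symm_apply τ j0
    have hprod : ∀ t : ℝ, (∏ i, K ((Fin.cons t x : Fin (k' + 1) → ℝ)
            ((Equiv.Perm.decomposeFin.symm (j0.succ, τ)) i))
          ((Fin.cons t x : Fin (k' + 1) → ℝ) i))
        = (K (x j0) t * K t (x m)) * ∏ j ∈ Finset.univ.erase m, K (x (τ j)) (x j) := by
      intro t
      rw [Fin.prod_univ_succ]
      rw [← Finset.mul_prod_erase Finset.univ _ (Finset.mem_univ m)]
      have h0 : K ((Fin.cons t x : Fin (k' + 1) → ℝ)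
            ((Equiv.Perm.decomposeFin.symm (j0.succ, τ)) 0))
          ((Fin.cons t x : Fin (k' + 1) → ℝ) 0) = K (x j0) t := by
        rw [Equiv.Perm.decomposeFin_symm_apply_zero]; simp
      have hmm : K ((Fin.cons t x : Fin (k' + 1) → ℝ)
            ((Equiv.Perm.decomposeFin.symm (j0.succ, τ)) m.succ))
          ((Fin.cons t x : Fin (k' + 1) → ℝ) m.succ) = K t (x m) := by
        rw [Equiv.Perm.decomposeFin_symm_apply_succ, hτm, Equiv.swap_apply_right]; simp
      have hrest : ∀ j ∈ Finset.univ.erase m,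
          K ((Fin.cons t x : Fin (k' + 1) → ℝ)
              ((Equiv.Perm.decomposeFin.symm (j0.succ, τ)) j.succ))
            ((Fin.cons t x : Fin (k' + 1) → ℝ) j.succ) = K (x (τ j)) (x j) := by
        intro j hj
        have hjm : j ≠ m := Finset.ne_of_mem_erase hj
        have hne : τ j ≠ j0 := by
          intro hc
          exact hjm (τ.injective (by rw [hc, hτm]))
        rw [Equiv.Perm.decomposeFin_symm_apply_succ,
          Equiv.swap_apply_of_ne_of_ne (Fin.succ_ne_zero _)
            (by simpa [Fin.succ_inj] using hne)]
        simp
      rw [h0, hmm, Finset.prod_congr rfl hrest]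
      ring
    simp only [hprod]
    rw [show (fun t => ((K (x j0) t * K t (x m)) *
          ∏ j ∈ Finset.univ.erase m, K (x (τ j)) (x j)) * w t)
        = fun t => (∏ j ∈ Finset.univ.erase m, K (x (τ j)) (x j)) *
            ((K (x j0) t * K t (x m)) * w t) from funext fun t => by ring]
    rw [integral_const_mul, hrep, Equiv.Perm.decomposeFin.symm_sign,
      if_neg (Fin.succ_ne_zero j0)]
    rw [show K (x j0) (x m) = K (x (τ m)) (x m) from by rw [hτm]]
    rw [mul_comm (∏ j ∈ Finset.univ.erase m, K (x (τ j)) (x j)),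
      Finset.mul_prod_erase Finset.univ (fun j => K (x (τ j)) (x j)) (Finset.mem_univ m)]
    simp only [Units.val_mul, Units.val_neg, Units.val_one, Int.cast_mul,
      Int.cast_neg, Int.cast_one]
    ring
  -- assemble everything
  rw [step1]
  rw [← Equiv.sum_comp Equiv.Perm.decomposeFin.symm
    (fun σ : Equiv.Perm (Fin (k' + 1)) => ((Equiv.Perm.sign σ : ℤ) : ℝ) *
      ∫ t : ℝ, (∏ i, K ((Fin.cons t x : Fin (k' + 1) → ℝ) (σ i))
        ((Fin.cons t x : Fin (k' + 1) → ℝ) i)) * w t)]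
  rw [Fintype.sum_prod_type, Fin.sum_univ_succ]
  simp only [hzero, hsucc]
  have hdetk : Matrix.det (Matrix.of fun i j : Fin k' => K (x i) (x j))
      = ∑ τ : Equiv.Perm (Fin k'), ((Equiv.Perm.sign τ : ℤ) : ℝ) * ∏ j, K (x (τ j)) (x j) := by
    rw [Matrix.det_apply']; rfl
  rw [← Finset.mul_sum]
  simp only [Finset.sum_neg_distrib]
  rw [Finset.sum_const, Finset.card_univ, Fintype.card_fin, ← hdetk, nsmul_eq_mul]
  push_cast
  ring
end

section
/- Heine's theorem: for every n ≥ 1 and every ξ ∈ ℝ, the monic orthogonal polynomial equals the average of the characteristic polynomial: p_n(ξ) · ∫_{ℝ^n} Δ(x_1,…,x_n)^2 ∏_{i=1}^n w(x_i) dx = ∫_{ℝ^n} ( ∏_{i=1}^n (ξ − x_i) ) · Δ(x_1,…,x_n)^2 · ∏_{i=1}^n w(x_i) dx. -/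
open MeasureTheory Polynomial

set_option maxHeartbeats 1000000

theorem heine_orthogonal_polynomial_as_matrix_integral
    (N : ℕ) (hN : 1 ≤ N) (V : Polynomial ℝ)
    (hVdeg : 2 ≤ V.natDegree) (hVeven : Even V.natDegree) (hVlead : 0 < V.leadingCoeff)
    (w : ℝ → ℝ) (hw : ∀ x : ℝ, w x = Real.exp (-(N : ℝ) * V.eval x))
    (p : ℕ → Polynomial ℝ) (hmonic : ∀ n, (p n).Monic) (hdeg : ∀ n, (p n).natDegree = n)
    (h : ℕ → ℝ) (hpos : ∀ n, 0 < h n)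
    (horth : ∀ n m : ℕ,
      (∫ x : ℝ, (p n).eval x * (p m).eval x * w x) = if n = m then h n else 0)
    (n : ℕ) (hn : 1 ≤ n) (ξ : ℝ) :
    (p n).eval ξ *
        ∫ x : Fin n → ℝ,
          (∏ i : Fin n, ∏ j ∈ Finset.Iio i, (x i - x j)) ^ 2 * ∏ i : Fin n, w (x i)
      = ∫ x : Fin n → ℝ,
          (∏ i : Fin n, (ξ - x i))
            * (∏ i : Fin n, ∏ j ∈ Finset.Iio i, (x i - x j)) ^ 2 * ∏ i : Fin n, w (x i) := by
  classical
  -- basic properties of the weight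
  have hwc : Continuous w := by
    have hweq : w = fun x => Real.exp (-(N : ℝ) * V.eval x) := funext hw
    rw [hweq]
    exact Real.continuous_exp.comp (continuous_const.mul V.continuous)
  have hwpos : ∀ x : ℝ, 0 < w x := fun x => by rw [hw x]; exact Real.exp_pos _
  -- integrability of p_i * p_i * w
  have hInt2 : ∀ i, Integrable fun x : ℝ => (p i).eval x * (p i).eval x * w x := by
    intro i
    by_contra hni
    have h0 := integral_undef hni
    rw [horth i i, if_pos rfl] at h0
    exact (hpos i).ne' h0
  -- integrability of p_i * p_j * w
  have hIntij : ∀ i j, Integrable fun x : ℝ => (p i).eval x * (p j).eval x * w x := by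
    intro i j
    refine Integrable.mono' ((hInt2 i).add (hInt2 j))
      ((((p i).continuous.mul (p j).continuous).mul hwc).aestronglyMeasurable)
      (Filter.Eventually.of_forall fun x => ?_)
    have hwx := (hwpos x).le
    have h1 : 0 ≤ ((p i).eval x - (p j).eval x) ^ 2 * w x := mul_nonneg (sq_nonneg _) hwx
    have h2 : 0 ≤ ((p i).eval x + (p j).eval x) ^ 2 * w x := mul_nonneg (sq_nonneg _) hwx
    rw [Real.norm_eq_abs, abs_le]
    constructor <;> simp only [Pi.add_apply] <;> nlinarith [h1, h2]
  -- Fubini for finite products of one-variable integrands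
  have key : ∀ (m : ℕ) (a b : Fin m → ℕ),
      (∫ x : Fin m → ℝ, ∏ i, ((p (a i)).eval (x i) * (p (b i)).eval (x i) * w (x i)))
        = ∏ i, (if a i = b i then h (a i) else (0 : ℝ)) := by
    intro m a b
    rw [MeasureTheory.volume_pi, MeasureTheory.integral_fintype_prod_eq_prod (ι := Fin m)
      (fun i t => (p (a i)).eval t * (p (b i)).eval t * w t)]
    exact Finset.prod_congr rfl fun i _ => horth (a i) (b i)
  -- determinant as a sum over permutations in the convenient orientation
  have hdetsum : ∀ (m : ℕ) (a : Fin m → ℕ) (v : Fin m → ℝ),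
      Matrix.det (Matrix.of fun i j : Fin m => (p (a j)).eval (v i))
        = ∑ σ : Equiv.Perm (Fin m),
            ((Equiv.Perm.sign σ : ℤ) : ℝ) * ∏ i, (p (a (σ i))).eval (v i) := by
    intro m a v
    rw [← Matrix.det_transpose, Matrix.det_apply']
    rfl
  -- the main integral computation
  have G : ∀ a b : Fin n → ℕ,
      Integrable (fun x : Fin n → ℝ =>
          Matrix.det (Matrix.of fun i j : Fin n => (p (a j)).eval (x i)) *
            Matrix.det (Matrix.of fun i j : Fin n => (p (b j)).eval (x i)) * ∏ i, w (x i))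
        ∧ (∫ x : Fin n → ℝ,
            Matrix.det (Matrix.of fun i j : Fin n => (p (a j)).eval (x i)) *
              Matrix.det (Matrix.of fun i j : Fin n => (p (b j)).eval (x i)) * ∏ i, w (x i))
          = ∑ σ : Equiv.Perm (Fin n), ∑ τ : Equiv.Perm (Fin n),
              ((Equiv.Perm.sign σ : ℤ) : ℝ) * ((Equiv.Perm.sign τ : ℤ) : ℝ) *
                ∏ i, (if a (σ i) = b (τ i) then h (a (σ i)) else (0 : ℝ)) := by
    intro a b
    have hpt : ∀ x : Fin n → ℝ,
        Matrix.det (Matrix.of fun i j : Fin n => (p (a j)).eval (x i)) *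
            Matrix.det (Matrix.of fun i j : Fin n => (p (b j)).eval (x i)) * ∏ i, w (x i)
          = ∑ σ : Equiv.Perm (Fin n), ∑ τ : Equiv.Perm (Fin n),
              ((Equiv.Perm.sign σ : ℤ) : ℝ) * ((Equiv.Perm.sign τ : ℤ) : ℝ) *
                ∏ i, ((p (a (σ i))).eval (x i) * (p (b (τ i))).eval (x i) * w (x i)) := by
      intro x
      rw [hdetsum n a x, hdetsum n b x, Fintype.sum_mul_sum, Finset.sum_mul]
      refine Finset.sum_congr rfl fun σ _ => ?_
      rw [Finset.sum_mul]
      refine Finset.sum_congr rfl fun τ _ => ?_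
      simp only [Finset.prod_mul_distrib]
      ring
    have hterm : ∀ σ τ : Equiv.Perm (Fin n),
        Integrable (fun x : Fin n → ℝ =>
          ((Equiv.Perm.sign σ : ℤ) : ℝ) * ((Equiv.Perm.sign τ : ℤ) : ℝ) *
            ∏ i, ((p (a (σ i))).eval (x i) * (p (b (τ i))).eval (x i) * w (x i))) := by
      intro σ τ
      exact (Integrable.fintype_prod
        (f := fun (i : Fin n) (t : ℝ) => (p (a (σ i))).eval t * (p (b (τ i))).eval t * w t)
        (fun i => hIntij _ _)).const_mul _
    constructor
    · simp only [hpt]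
      exact integrable_finset_sum _ fun σ _ => integrable_finset_sum _ fun τ _ => hterm σ τ
    · simp only [hpt]
      rw [integral_finset_sum _ fun σ _ => integrable_finset_sum _ fun τ _ => hterm σ τ]
      refine Finset.sum_congr rfl fun σ _ => ?_
      rw [integral_finset_sum _ fun τ _ => hterm σ τ]
      refine Finset.sum_congr rfl fun τ _ => ?_
      rw [integral_const_mul, key n fun i => a (σ i)]
  -- evaluation of the diagonal double sum
  have hsign : ∀ σ : Equiv.Perm (Fin n),
      ((Equiv.Perm.sign σ : ℤ) : ℝ) * ((Equiv.Perm.sign σ : ℤ) : ℝ) = 1 := by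
    intro σ
    rw [← Int.cast_mul, ← Units.val_mul, Int.units_mul_self, Units.val_one, Int.cast_one]
  have Ediag : ∀ a b : Fin n → ℕ, (∀ j, a j = (j : ℕ)) → (∀ j, b j = (j : ℕ)) →
      (∑ σ : Equiv.Perm (Fin n), ∑ τ : Equiv.Perm (Fin n),
        ((Equiv.Perm.sign σ : ℤ) : ℝ) * ((Equiv.Perm.sign τ : ℤ) : ℝ) *
          ∏ i, (if a (σ i) = b (τ i) then h (a (σ i)) else (0 : ℝ)))
        = (Fintype.card (Equiv.Perm (Fin n)) : ℝ) * ∏ i : Fin n, h (i : ℕ) := by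
    intro a b ha hb
    have hinner : ∀ σ : Equiv.Perm (Fin n),
        (∑ τ : Equiv.Perm (Fin n),
          ((Equiv.Perm.sign σ : ℤ) : ℝ) * ((Equiv.Perm.sign τ : ℤ) : ℝ) *
            ∏ i, (if a (σ i) = b (τ i) then h (a (σ i)) else (0 : ℝ)))
          = ∏ i : Fin n, h (i : ℕ) := by
      intro σ
      rw [Finset.sum_eq_single σ]
      · have hprod : (∏ i, (if a (σ i) = b (σ i) then h (a (σ i)) else (0 : ℝ)))
            = ∏ i : Fin n, h (i : ℕ) := by
          rw [Finset.prod_congr rfl fun i _ => if_pos (by rw [ha, hb])]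
          calc (∏ i, h (a (σ i))) = ∏ i, h ((σ i : ℕ)) :=
                Finset.prod_congr rfl fun i _ => by rw [ha]
            _ = ∏ i : Fin n, h (i : ℕ) := Equiv.prod_comp σ fun i => h (i : ℕ)
        rw [hprod, hsign σ, one_mul]
      · intro τ _ hτ
        have : ∃ i, σ i ≠ τ i := by
          by_contra hc
          push_neg at hc
          exact hτ (Equiv.ext fun i => (hc i).symm)
        obtain ⟨i, hi⟩ := this
        have h0 : (∏ i, (if a (σ i) = b (τ i) then h (a (σ i)) else (0 : ℝ))) = 0 :=
          Finset.prod_eq_zero (Finset.mem_univ i)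
            (if_neg (by rw [ha, hb]; exact fun hv => hi (Fin.val_injective hv)))
        rw [h0, mul_zero]
      · intro hσ
        exact absurd (Finset.mem_univ σ) hσ
    rw [Finset.sum_congr rfl fun σ _ => hinner σ, Finset.sum_const, Finset.card_univ,
      nsmul_eq_mul]
  -- Vandermonde in the Iio orientation
  have hswap : ∀ (m : ℕ) (v : Fin m → ℝ),
      (∏ i : Fin m, ∏ j ∈ Finset.Iio i, (v i - v j)) = (Matrix.vandermonde v).det := by
    intro m v
    rw [Matrix.det_vandermonde]
    exact Finset.prod_comm' fun x y => by
      simp only [Finset.mem_univ, Finset.mem_Iio, Finset.mem_Ioi, true_and, and_true]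
  have hD : ∀ (m : ℕ) (v : Fin m → ℝ),
      (∏ i : Fin m, ∏ j ∈ Finset.Iio i, (v i - v j))
        = Matrix.det (Matrix.of fun i j : Fin m => (p ((j : Fin m) : ℕ)).eval (v i)) := by
    intro m v
    rw [hswap m v, Matrix.det_eval_matrixOfPolynomials_eq_det_vandermonde v
      (fun j => p (j : ℕ)) (fun i => hdeg _) (fun i => hmonic _)]
  -- splitting off the last variable of the Vandermonde product
  have hsnoc : ∀ x : Fin n → ℝ,
      (∏ i : Fin (n + 1), ∏ j ∈ Finset.Iio i,
          ((Fin.snoc x ξ : Fin (n + 1) → ℝ) i - (Fin.snoc x ξ : Fin (n + 1) → ℝ) j))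
        = (∏ i : Fin n, (ξ - x i)) * ∏ i : Fin n, ∏ j ∈ Finset.Iio i, (x i - x j) := by
    intro x
    rw [Fin.prod_univ_castSucc]
    have h1 : ∀ i : Fin n,
        (∏ j ∈ Finset.Iio (Fin.castSucc i),
            ((Fin.snoc x ξ : Fin (n + 1) → ℝ) (Fin.castSucc i)
              - (Fin.snoc x ξ : Fin (n + 1) → ℝ) j))
          = ∏ j ∈ Finset.Iio i, (x i - x j) := by
      intro i
      rw [Fin.Iio_castSucc, Finset.prod_map]
      refine Finset.prod_congr rfl fun j _ => ?_
      show (Fin.snoc x ξ : Fin (n + 1) → ℝ) (Fin.castSucc i) - (Fin.snoc x ξ : Fin (n + 1) → ℝ) (Fin.castSucc j) = x i - x j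
      rw [Fin.snoc_castSucc, Fin.snoc_castSucc]
    have h2 : (∏ j ∈ Finset.Iio (Fin.last n),
          ((Fin.snoc x ξ : Fin (n + 1) → ℝ) (Fin.last n)
            - (Fin.snoc x ξ : Fin (n + 1) → ℝ) j))
        = ∏ j : Fin n, (ξ - x j) := by
      rw [Fin.Iio_last_eq_map, Finset.prod_map]
      refine Finset.prod_congr rfl fun j _ => ?_
      show (Fin.snoc x ξ : Fin (n + 1) → ℝ) (Fin.last n) - (Fin.snoc x ξ : Fin (n + 1) → ℝ) (Fin.castSucc j) = ξ - x j
      rw [Fin.snoc_last, Fin.snoc_castSucc]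
    rw [h2, Finset.prod_congr rfl fun i _ => h1 i]
    ring
  -- determinant of the extended (n+1) × (n+1) matrix
  have hNdet : ∀ x : Fin n → ℝ,
      Matrix.det (Matrix.of fun i j : Fin (n + 1) =>
          (p ((j : Fin (n + 1)) : ℕ)).eval (Fin.snoc x ξ i))
        = (∏ i : Fin n, (ξ - x i)) * ∏ i : Fin n, ∏ j ∈ Finset.Iio i, (x i - x j) := by
    intro x
    rw [← Matrix.det_eval_matrixOfPolynomials_eq_det_vandermonde (Fin.snoc x ξ)
      (fun j => p (j : ℕ)) (fun i => hdeg _) (fun i => hmonic _), ← hswap, hsnoc]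
  -- Laplace expansion of the extended determinant along the last row
  have hLap : ∀ x : Fin n → ℝ,
      Matrix.det (Matrix.of fun i j : Fin (n + 1) =>
          (p ((j : Fin (n + 1)) : ℕ)).eval (Fin.snoc x ξ i))
        = ∑ k : Fin (n + 1), (-1 : ℝ) ^ (n + (k : ℕ)) * (p (k : ℕ)).eval ξ *
            Matrix.det (Matrix.of fun i j : Fin n =>
              (p ((Fin.succAbove k j : Fin (n + 1)) : ℕ)).eval (x i)) := by
    intro x
    rw [Matrix.det_succ_row _ (Fin.last n)]
    refine Finset.sum_congr rfl fun k _ => ?_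
    have e1 : (Matrix.of fun i j : Fin (n + 1) =>
        (p ((j : Fin (n + 1)) : ℕ)).eval (Fin.snoc x ξ i)) (Fin.last n) k
          = (p (k : ℕ)).eval ξ := by
      simp [Fin.snoc_last]
    have e2 : (Matrix.of fun i j : Fin (n + 1) =>
          (p ((j : Fin (n + 1)) : ℕ)).eval (Fin.snoc x ξ i)).submatrix
            (Fin.last n).succAbove k.succAbove
        = Matrix.of fun i j : Fin n =>
            (p ((Fin.succAbove k j : Fin (n + 1)) : ℕ)).eval (x i) := by
      ext i j
      simp [Fin.succAbove_last, Fin.snoc_castSucc]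
    rw [e1, e2, Fin.val_last]
  -- value of the left-hand side integral
  have hL : (∫ x : Fin n → ℝ,
        (∏ i : Fin n, ∏ j ∈ Finset.Iio i, (x i - x j)) ^ 2 * ∏ i : Fin n, w (x i))
      = (Fintype.card (Equiv.Perm (Fin n)) : ℝ) * ∏ i : Fin n, h (i : ℕ) := by
    have hpt : ∀ x : Fin n → ℝ,
        (∏ i : Fin n, ∏ j ∈ Finset.Iio i, (x i - x j)) ^ 2 * ∏ i : Fin n, w (x i)
          = Matrix.det (Matrix.of fun i j : Fin n => (p ((j : Fin n) : ℕ)).eval (x i)) *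
              Matrix.det (Matrix.of fun i j : Fin n => (p ((j : Fin n) : ℕ)).eval (x i)) *
              ∏ i, w (x i) := by
      intro x
      rw [pow_two, hD n x]
    simp only [hpt]
    exact ((G (fun j : Fin n => (j : ℕ)) (fun j : Fin n => (j : ℕ))).2).trans
      (Ediag (fun j : Fin n => (j : ℕ)) (fun j : Fin n => (j : ℕ)) (fun _ => rfl) (fun _ => rfl))
  -- value of the right-hand side integral
  have hR : (∫ x : Fin n → ℝ,
        (∏ i : Fin n, (ξ - x i))
          * (∏ i : Fin n, ∏ j ∈ Finset.Iio i, (x i - x j)) ^ 2 * ∏ i : Fin n, w (x i))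
      = (p n).eval ξ *
          ((Fintype.card (Equiv.Perm (Fin n)) : ℝ) * ∏ i : Fin n, h (i : ℕ)) := by
    have hpt : ∀ x : Fin n → ℝ,
        (∏ i : Fin n, (ξ - x i))
            * (∏ i : Fin n, ∏ j ∈ Finset.Iio i, (x i - x j)) ^ 2 * ∏ i : Fin n, w (x i)
          = ∑ k : Fin (n + 1), ((-1 : ℝ) ^ (n + (k : ℕ)) * (p (k : ℕ)).eval ξ) *
              (Matrix.det (Matrix.of fun i j : Fin n =>
                  (p ((Fin.succAbove k j : Fin (n + 1)) : ℕ)).eval (x i)) *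
                Matrix.det (Matrix.of fun i j : Fin n => (p ((j : Fin n) : ℕ)).eval (x i)) *
                ∏ i, w (x i)) := by
      intro x
      have e : (∏ i : Fin n, (ξ - x i))
            * (∏ i : Fin n, ∏ j ∈ Finset.Iio i, (x i - x j)) ^ 2 * ∏ i : Fin n, w (x i)
          = Matrix.det (Matrix.of fun i j : Fin (n + 1) =>
              (p ((j : Fin (n + 1)) : ℕ)).eval (Fin.snoc x ξ i)) *
            Matrix.det (Matrix.of fun i j : Fin n => (p ((j : Fin n) : ℕ)).eval (x i)) *
            ∏ i, w (x i) := by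
        rw [hNdet x, ← hD n x]
        ring
      rw [e, hLap x, Finset.sum_mul, Finset.sum_mul]
      exact Finset.sum_congr rfl fun k _ => by ring
    simp only [hpt]
    rw [integral_finset_sum _ fun k _ => Integrable.const_mul (G _ _).1 _]
    rw [Finset.sum_congr rfl fun k _ => integral_const_mul _ _]
    rw [Finset.sum_eq_single (Fin.last n)]
    · have hval : (∫ x : Fin n → ℝ,
          Matrix.det (Matrix.of fun i j : Fin n =>
              (p ((Fin.succAbove (Fin.last n) j : Fin (n + 1)) : ℕ)).eval (x i)) *
            Matrix.det (Matrix.of fun i j : Fin n => (p ((j : Fin n) : ℕ)).eval (x i)) *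
            ∏ i, w (x i))
          = (Fintype.card (Equiv.Perm (Fin n)) : ℝ) * ∏ i : Fin n, h (i : ℕ) :=
        ((G (fun j : Fin n => ((Fin.succAbove (Fin.last n) j : Fin (n + 1)) : ℕ))
            (fun j : Fin n => (j : ℕ))).2).trans
          (Ediag (fun j : Fin n => ((Fin.succAbove (Fin.last n) j : Fin (n + 1)) : ℕ))
            (fun j : Fin n => (j : ℕ))
            (fun j => by rw [Fin.succAbove_last]; rfl) (fun _ => rfl))
      rw [hval, Fin.val_last]
      have hpow : (-1 : ℝ) ^ (n + n) = 1 := Even.neg_one_pow ⟨n, rfl⟩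
      rw [hpow, one_mul]
    · intro k _ hk
      have hzero : (∫ x : Fin n → ℝ,
          Matrix.det (Matrix.of fun i j : Fin n =>
              (p ((Fin.succAbove k j : Fin (n + 1)) : ℕ)).eval (x i)) *
            Matrix.det (Matrix.of fun i j : Fin n => (p ((j : Fin n) : ℕ)).eval (x i)) *
            ∏ i, w (x i)) = 0 := by
        rw [(G (fun j : Fin n => ((Fin.succAbove k j : Fin (n + 1)) : ℕ))
          (fun j : Fin n => (j : ℕ))).2]
        refine Finset.sum_eq_zero fun σ _ => Finset.sum_eq_zero fun τ _ => ?_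
        obtain ⟨z, hz⟩ := Fin.exists_succAbove_eq (show Fin.last n ≠ k from Ne.symm hk)
        have h0 : (∏ i, (if ((Fin.succAbove k (σ i) : Fin (n + 1)) : ℕ) = ((τ i : Fin n) : ℕ)
            then h ((Fin.succAbove k (σ i) : Fin (n + 1)) : ℕ) else (0 : ℝ))) = 0 := by
          refine Finset.prod_eq_zero (Finset.mem_univ (σ⁻¹ z)) (if_neg ?_)
          rw [Equiv.Perm.coe_inv, Equiv.apply_symm_apply, hz, Fin.val_last]
          intro hc
          have := (τ (σ⁻¹ z)).isLt
          omega
        rw [h0, mul_zero]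
      rw [hzero, mul_zero]
    · intro hmem
      exact absurd (Finset.mem_univ _) hmem
  rw [hL, hR]
end

section
/- Sokhotski–Plemelj jump relation: if f : ℝ → ℝ is continuous with compact support, then for every x₀ ∈ ℝ, lim_{ε→0⁺} [ ∫_ℝ f(t)/((x₀ + iε) − t) dt − ∫_ℝ f(t)/((x₀ − iε) − t) dt ] = −2πi·f(x₀). (This is the discontinuity across the real axis of the Cauchy transform giving the jump of the second solution φ_n of the Riemann–Hilbert problem.) -/
open MeasureTheory Filter Topology

lemma poisson_limit (f : ℝ → ℝ) (hf : Continuous f) (hsupp : HasCompactSupport f) (x₀ : ℝ) :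
    Tendsto (fun ε : ℝ => ∫ t : ℝ, ε * f t / ((x₀ - t) ^ 2 + ε ^ 2)) (𝓝[>] 0)
      (𝓝 (Real.pi * f x₀)) := by
  obtain ⟨C, hC⟩ := hsupp.exists_bound_of_continuous hf
  have key : ∀ ε : ℝ, 0 < ε →
      (∫ t : ℝ, ε * f t / ((x₀ - t) ^ 2 + ε ^ 2)) = ∫ s : ℝ, f (x₀ + ε * s) / (1 + s ^ 2) := by
    intro ε hε
    have hε' : ε ≠ 0 := ne_of_gt hε
    have h1 : (∫ s : ℝ, f (x₀ + ε * s) / (1 + s ^ 2))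
        = ∫ s : ℝ, (fun u : ℝ => ε ^ 2 * f (x₀ + u) / (u ^ 2 + ε ^ 2)) (ε * s) := by
      congr 1; ext s
      show f (x₀ + ε * s) / (1 + s ^ 2) = ε ^ 2 * f (x₀ + ε * s) / ((ε * s) ^ 2 + ε ^ 2)
      rw [show (ε * s) ^ 2 + ε ^ 2 = ε ^ 2 * (1 + s ^ 2) by ring,
        mul_div_mul_left _ _ (pow_ne_zero 2 hε')]
    rw [h1, MeasureTheory.Measure.integral_comp_mul_left (fun u : ℝ => ε ^ 2 * f (x₀ + u) / (u ^ 2 + ε ^ 2)) ε, abs_of_pos (inv_pos.mpr hε),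
      ← integral_smul,
      ← MeasureTheory.integral_add_left_eq_self (fun u : ℝ => ε * f u / ((x₀ - u) ^ 2 + ε ^ 2)) x₀]
    congr 1; ext u
    show ε * f (x₀ + u) / ((x₀ - (x₀ + u)) ^ 2 + ε ^ 2)
      = ε⁻¹ • (ε ^ 2 * f (x₀ + u) / (u ^ 2 + ε ^ 2))
    rw [show (x₀ - (x₀ + u)) ^ 2 = u ^ 2 by ring, smul_eq_mul]
    have h2 : u ^ 2 + ε ^ 2 ≠ 0 := by positivity
    field_simp
  have lim : Tendsto (fun ε : ℝ => ∫ s : ℝ, f (x₀ + ε * s) / (1 + s ^ 2)) (𝓝[>] 0)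
      (𝓝 (∫ s : ℝ, f x₀ / (1 + s ^ 2))) := by
    apply MeasureTheory.tendsto_integral_filter_of_dominated_convergence
      (fun s : ℝ => C / (1 + s ^ 2))
    · filter_upwards with ε
      exact ((hf.comp (continuous_const.add (continuous_const.mul continuous_id))).div
        (by continuity) (fun s => by positivity)).aestronglyMeasurable
    · filter_upwards with ε
      filter_upwards with s
      have h1 : (0:ℝ) < 1 + s ^ 2 := by positivity
      rw [norm_div, Real.norm_eq_abs (1 + s ^ 2), abs_of_pos h1]
      gcongr
      exact hC _
    · exact (integrable_inv_one_add_sq.const_mul C).congr (by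
        filter_upwards with s; rw [div_eq_mul_inv])
    · filter_upwards with s
      apply Tendsto.div_const
      have hcont : Continuous (fun ε : ℝ => x₀ + ε * s) := by continuity
      have hc : Tendsto (fun ε : ℝ => x₀ + ε * s) (𝓝 0) (𝓝 x₀) := by
        simpa using hcont.tendsto 0
      exact (hf.tendsto x₀).comp (hc.mono_left nhdsWithin_le_nhds)
  have heq : (∫ s : ℝ, f x₀ / (1 + s ^ 2)) = Real.pi * f x₀ := by
    simp_rw [div_eq_mul_inv]
    rw [MeasureTheory.integral_const_mul, integral_univ_inv_one_add_sq]
    ring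
  rw [heq] at lim
  refine lim.congr' ?_
  filter_upwards [self_mem_nhdsWithin] with ε hε
  exact (key ε hε).symm

theorem sokhotski_plemelj_jump
    (f : ℝ → ℝ) (hf : Continuous f) (hsupp : HasCompactSupport f) (x₀ : ℝ) :
    Filter.Tendsto
      (fun ε : ℝ =>
        (∫ t : ℝ, (f t : ℂ) / (((x₀ : ℂ) + (ε : ℂ) * Complex.I) - (t : ℂ)))
          - ∫ t : ℝ, (f t : ℂ) / (((x₀ : ℂ) - (ε : ℂ) * Complex.I) - (t : ℂ)))
      (𝓝[>] (0 : ℝ))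
      (𝓝 (-(2 * (Real.pi : ℂ) * Complex.I * (f x₀ : ℂ)))) := by
  have lim := poisson_limit f hf hsupp x₀
  have lim2 : Tendsto
      (fun ε : ℝ => (-2 * Complex.I) *
        ((∫ t : ℝ, ε * f t / ((x₀ - t) ^ 2 + ε ^ 2) : ℝ) : ℂ))
      (𝓝[>] 0) (𝓝 ((-2 * Complex.I) * ((Real.pi * f x₀ : ℝ) : ℂ))) :=
    ((Complex.continuous_ofReal.tendsto _).comp lim).const_mul _
  have htarget : (-2 * Complex.I) * ((Real.pi * f x₀ : ℝ) : ℂ)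
      = -(2 * (Real.pi : ℂ) * Complex.I * (f x₀ : ℂ)) := by
    push_cast; ring
  rw [htarget] at lim2
  refine lim2.congr' ?_
  filter_upwards [self_mem_nhdsWithin] with ε (hε : (0:ℝ) < ε)
  have hε' : ε ≠ 0 := ne_of_gt hε
  have hsupp' : HasCompactSupport (fun t : ℝ => (f t : ℂ)) :=
    hsupp.comp_left (g := Complex.ofReal) Complex.ofReal_zero
  have hne₁ : ∀ t : ℝ, (((x₀ : ℂ) + (ε : ℂ) * Complex.I) - (t : ℂ)) ≠ 0 := by
    intro t h
    have him := congrArg Complex.im h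
    simp at him
    exact hε' him
  have hne₂ : ∀ t : ℝ, (((x₀ : ℂ) - (ε : ℂ) * Complex.I) - (t : ℂ)) ≠ 0 := by
    intro t h
    have him := congrArg Complex.im h
    simp at him
    exact hε' him
  have hi₁ : Integrable (fun t : ℝ => (f t : ℂ) / (((x₀ : ℂ) + (ε : ℂ) * Complex.I) - (t : ℂ))) := by
    apply Continuous.integrable_of_hasCompactSupport
    · exact (Complex.continuous_ofReal.comp hf).div
        (continuous_const.sub Complex.continuous_ofReal) hne₁
    · simp only [div_eq_mul_inv]
      exact hsupp'.mul_right
  have hi₂ : Integrable (fun t : ℝ => (f t : ℂ) / (((x₀ : ℂ) - (ε : ℂ) * Complex.I) - (t : ℂ))) := by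
    apply Continuous.integrable_of_hasCompactSupport
    · exact (Complex.continuous_ofReal.comp hf).div
        (continuous_const.sub Complex.continuous_ofReal) hne₂
    · simp only [div_eq_mul_inv]
      exact hsupp'.mul_right
  rw [show ((∫ t : ℝ, ε * f t / ((x₀ - t) ^ 2 + ε ^ 2) : ℝ) : ℂ)
      = ∫ t : ℝ, ((ε * f t / ((x₀ - t) ^ 2 + ε ^ 2) : ℝ) : ℂ)
    from (integral_ofReal (𝕜 := ℂ)).symm,
    ← MeasureTheory.integral_const_mul, ← integral_sub hi₁ hi₂]
  congr 1; ext t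
  have hA := hne₁ t
  have hB := hne₂ t
  have hd : ((x₀ - t) ^ 2 + ε ^ 2 : ℝ) ≠ 0 := by positivity
  have hdC : (((x₀ - t) ^ 2 + ε ^ 2 : ℝ) : ℂ) ≠ 0 := by exact_mod_cast hd
  have hAB : (((x₀ : ℂ) + (ε : ℂ) * Complex.I) - (t : ℂ))
      * (((x₀ : ℂ) - (ε : ℂ) * Complex.I) - (t : ℂ))
      = (((x₀ - t) ^ 2 + ε ^ 2 : ℝ) : ℂ) := by
    push_cast
    ring_nf
    rw [Complex.I_sq]
    ring
  rw [div_sub_div _ _ hA hB, hAB]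
  push_cast
  field_simp
  ring
end

section
/- The wave functions satisfy a differential system with polynomial coefficients: for every n ≥ 1 there exist real polynomials A, B, C, D, each of degree at most deg V − 1, such that for all x ∈ ℝ: −(1/N)·ψ_n′(x) = A(x)·ψ_n(x) + B(x)·ψ_{n−1}(x) and −(1/N)·ψ_{n−1}′(x) = C(x)·ψ_n(x) + D(x)·ψ_{n−1}(x). -/
open MeasureTheory Polynomial Filter Set

namespace WaveAux

lemma natDegree_le_of_degree_lt' {R : Polynomial ℝ} {m : ℕ} (hR : R.degree < ((m : ℕ) : WithBot ℕ)) :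
    R.natDegree ≤ m - 1 ∧ R.natDegree < m ∨ R = 0 := by
  rcases eq_or_ne R 0 with rfl | h
  · right; rfl
  · left
    have := (Polynomial.natDegree_lt_iff_degree_lt h).mpr hR
    omega

lemma quad_lower (V : Polynomial ℝ) (hVdeg : 2 ≤ V.natDegree) (hVeven : Even V.natDegree)
    (hVlead : 0 < V.leadingCoeff) :
    ∃ c : ℝ, 0 < c ∧ ∃ C0 : ℝ, ∀ x : ℝ, c * x ^ 2 - C0 ≤ V.eval x := by
  set c : ℝ := min (V.leadingCoeff / 2) 1 with hc
  have hcpos : 0 < c := lt_min (by linarith) one_pos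
  set W : Polynomial ℝ := V - Polynomial.C c * X ^ 2 with hW
  have hVne : V ≠ 0 := fun h => by simp [h] at hVlead
  have hcoeffW : W.coeff V.natDegree = V.coeff V.natDegree - c * (if V.natDegree = 2 then 1 else 0) := by
    rcases eq_or_ne V.natDegree 2 with h2 | h2
    · simp [hW, h2, Polynomial.coeff_C_mul, Polynomial.coeff_X_pow]
    · simp [hW, Polynomial.coeff_C_mul, Polynomial.coeff_X_pow, h2]
  have hWlead : 0 < W.coeff V.natDegree := by
    rcases eq_or_ne V.natDegree 2 with h2 | h2
    · rw [hcoeffW, if_pos h2]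
      have : c ≤ V.leadingCoeff / 2 := min_le_left _ _
      have : V.coeff V.natDegree = V.leadingCoeff := rfl
      rw [this]
      linarith [min_le_left (V.leadingCoeff / 2) (1:ℝ)]
    · rw [hcoeffW, if_neg h2]
      simpa using hVlead
  have hWdegle : W.natDegree ≤ V.natDegree := by
    apply (Polynomial.natDegree_sub_le _ _).trans
    simp only [max_le_iff]
    constructor
    · rfl
    · exact (Polynomial.natDegree_C_mul_le _ _).trans
        (by rw [Polynomial.natDegree_X_pow]; exact hVdeg)
  have hWdeg : W.natDegree = V.natDegree := by
    have h1 : V.natDegree ≤ W.natDegree := Polynomial.le_natDegree_of_ne_zero hWlead.ne'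
    omega
  have hWne : W ≠ 0 := fun h => by rw [h] at hWlead; simp at hWlead
  have hWlead' : 0 < W.leadingCoeff := by
    rwa [Polynomial.leadingCoeff, hWdeg]
  have hdegpos : 0 < W.degree := by
    rw [Polynomial.degree_eq_natDegree hWne]
    exact_mod_cast by omega
  -- tendsto atTop
  have htop : Tendsto (fun x => W.eval x) atTop atTop :=
    W.tendsto_atTop_of_leadingCoeff_nonneg hdegpos hWlead'.le
  -- tendsto atBot
  have hbot : Tendsto (fun x => W.eval x) atBot atTop := by
    set W' : Polynomial ℝ := W.comp (-X) with hW'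
    have hXdeg : ((-X : Polynomial ℝ)).natDegree = 1 := by simp
    have hW'lead : W'.leadingCoeff = W.leadingCoeff := by
      rw [hW', Polynomial.leadingCoeff_comp (by rw [hXdeg]; norm_num)]
      have : (-X : Polynomial ℝ).leadingCoeff = -1 := by simp
      rw [this, hWdeg]
      rcases hVeven with ⟨t, ht⟩
      rw [ht, ← two_mul]
      simp [pow_mul]
    have hW'deg : W'.natDegree = W.natDegree := by
      rw [hW', Polynomial.natDegree_comp, hXdeg, mul_one]
    have hW'ne : W' ≠ 0 := fun hh => by
      rw [hh] at hW'lead; simp at hW'lead; rw [← hW'lead] at hWlead'; simp at hWlead'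
    have hW'degpos : 0 < W'.degree := by
      rw [Polynomial.degree_eq_natDegree hW'ne, hW'deg]
      exact_mod_cast by rw [hWdeg]; omega
    have := W'.tendsto_atTop_of_leadingCoeff_nonneg hW'degpos (by rw [hW'lead]; exact hWlead'.le)
    have hcomp : Tendsto (fun x => W'.eval (-x)) atBot atTop := by
      apply this.comp
      exact tendsto_neg_atBot_atTop
    refine hcomp.congr fun x => ?_
    simp [hW', Polynomial.eval_comp]
  have hco : Tendsto (fun x => W.eval x) (cocompact ℝ) atTop := by
    rw [cocompact_eq_atBot_atTop, tendsto_sup]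
    exact ⟨hbot, htop⟩
  obtain ⟨x₀, hx₀⟩ := (W.continuous).exists_forall_le hco
  refine ⟨c, hcpos, -(W.eval x₀), fun x => ?_⟩
  have hWx : W.eval x = V.eval x - c * x ^ 2 := by simp [hW]
  have h1 := hx₀ x
  rw [hWx] at h1
  linarith


lemma exp_bound (N : ℕ) (hN : 1 ≤ N) (V : Polynomial ℝ) (c C0 : ℝ) (hc : 0 < c)
    (hq : ∀ x : ℝ, c * x ^ 2 - C0 ≤ V.eval x) :
    ∀ x : ℝ, Real.exp (-(N : ℝ) * V.eval x) ≤ Real.exp ((N : ℝ) * C0) * Real.exp (-(c * x ^ 2)) := by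
  intro x
  rw [← Real.exp_add]
  apply Real.exp_le_exp.mpr
  have hN1 : (1 : ℝ) ≤ (N : ℝ) := by exact_mod_cast hN
  have h1 := hq x
  have hx2 : 0 ≤ x ^ 2 := sq_nonneg x
  nlinarith [mul_le_mul_of_nonneg_left h1 (by linarith : (0:ℝ) ≤ (N:ℝ)),
    mul_nonneg (mul_nonneg (by linarith : (0:ℝ) ≤ (N:ℝ) - 1) hc.le) hx2]

lemma abs_poly_le (P : Polynomial ℝ) (x : ℝ) :
    |P.eval x| ≤ ∑ k ∈ Finset.range (P.natDegree + 1), |P.coeff k| * ((x ^ 2) ^ k + 1) := by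
  conv_lhs => rw [Polynomial.eval_eq_sum_range]
  refine (Finset.abs_sum_le_sum_abs _ _).trans (Finset.sum_le_sum ?_)
  intro k _
  rw [abs_mul]
  apply mul_le_mul_of_nonneg_left _ (abs_nonneg _)
  rw [abs_pow]
  rcases le_or_gt |x| 1 with hx | hx
  · have : |x| ^ k ≤ 1 := pow_le_one₀ (abs_nonneg x) hx
    have h2 : (0:ℝ) ≤ (x ^ 2) ^ k := by positivity
    linarith
  · have h1 : |x| ^ k ≤ |x| ^ (2 * k) := pow_le_pow_right₀ hx.le (by omega)
    have h2 : |x| ^ (2 * k) = (x ^ 2) ^ k := by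
      rw [pow_mul, sq_abs]
    nlinarith [pow_nonneg (abs_nonneg x) k]

lemma integrable_pow_sq_exp {c : ℝ} (hc : 0 < c) (k : ℕ) :
    Integrable fun x : ℝ => (x ^ 2) ^ k * Real.exp (-(c * x ^ 2)) := by
  have hs : (-1:ℝ) < ((2 * k : ℕ) : ℝ) := lt_of_lt_of_le (by norm_num) (Nat.cast_nonneg _)
  have h := integrable_rpow_mul_exp_neg_mul_sq hc (s := ((2 * k : ℕ) : ℝ)) hs
  have heq : (fun x : ℝ => (x ^ 2) ^ k * Real.exp (-(c * x ^ 2)))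
      = fun x : ℝ => x ^ ((2 * k : ℕ) : ℝ) * Real.exp (-c * x ^ 2) := by
    funext x
    rw [Real.rpow_natCast, pow_mul, neg_mul]
  rw [heq]
  exact h

lemma integrable_poly_weight (N : ℕ) (V : Polynomial ℝ) (c K : ℝ) (hc : 0 < c)
    (hbd : ∀ x : ℝ, Real.exp (-(N : ℝ) * V.eval x) ≤ K * Real.exp (-(c * x ^ 2)))
    (P : Polynomial ℝ) :
    Integrable fun x : ℝ => P.eval x * Real.exp (-(N : ℝ) * V.eval x) := by
  have hK : 0 ≤ K := by
    have h0 := (Real.exp_pos (-(N:ℝ) * V.eval 0)).le.trans (hbd 0)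
    nlinarith [Real.exp_pos (-(c * (0:ℝ) ^ 2))]
  set g : ℝ → ℝ := fun x => ∑ k ∈ Finset.range (P.natDegree + 1),
    (|P.coeff k| * K) * (((x ^ 2) ^ k + 1) * Real.exp (-(c * x ^ 2))) with hg
  have hgint : Integrable g := by
    apply integrable_finset_sum
    intro k _
    apply Integrable.const_mul
    have : (fun x : ℝ => ((x ^ 2) ^ k + 1) * Real.exp (-(c * x ^ 2)))
        = fun x : ℝ => (x ^ 2) ^ k * Real.exp (-(c * x ^ 2)) + Real.exp (-(c * x ^ 2)) := by
      funext x; ring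
    rw [this]
    apply (integrable_pow_sq_exp hc k).add
    have := integrable_exp_neg_mul_sq hc
    refine this.congr (Filter.Eventually.of_forall fun x => by simp [neg_mul])
  refine hgint.mono' ?_ ?_
  · exact (P.continuous.mul (Real.continuous_exp.comp (continuous_const.mul V.continuous))).aestronglyMeasurable
  · refine Filter.Eventually.of_forall fun x => ?_
    have hKe : 0 ≤ K * Real.exp (-(c * x ^ 2)) := (Real.exp_pos _).le.trans (hbd x)
    rw [Real.norm_eq_abs, abs_mul, abs_of_pos (Real.exp_pos _)]
    calc |P.eval x| * Real.exp (-(N:ℝ) * V.eval x)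
        ≤ (∑ k ∈ Finset.range (P.natDegree + 1), |P.coeff k| * ((x ^ 2) ^ k + 1))
            * (K * Real.exp (-(c * x ^ 2))) := by
          apply mul_le_mul (abs_poly_le P x) (hbd x) (Real.exp_pos _).le
          positivity
      _ = g x := by
          rw [hg, Finset.sum_mul]
          apply Finset.sum_congr rfl
          intro k _
          ring


lemma tendsto_pow_sq_exp {c : ℝ} (hc : 0 < c) (k : ℕ) {l : Filter ℝ}
    (hl : Tendsto (fun x : ℝ => x ^ 2) l atTop) :
    Tendsto (fun x : ℝ => (x ^ 2) ^ k * Real.exp (-(c * x ^ 2))) l (nhds 0) := by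
  have h1 : Tendsto (fun t : ℝ => t ^ k * Real.exp (-t)) atTop (nhds 0) :=
    Real.tendsto_pow_mul_exp_neg_atTop_nhds_zero k
  have h2 : Tendsto (fun x : ℝ => c * x ^ 2) l atTop := hl.const_mul_atTop hc
  have h3 := (h1.comp h2).const_mul ((c ^ k)⁻¹)
  rw [mul_zero] at h3
  refine h3.congr fun x => ?_
  simp only [Function.comp_apply]
  rw [mul_pow]
  field_simp

lemma tendsto_poly_weight (N : ℕ) (V : Polynomial ℝ) (c K : ℝ) (hc : 0 < c)
    (hbd : ∀ x : ℝ, Real.exp (-(N : ℝ) * V.eval x) ≤ K * Real.exp (-(c * x ^ 2)))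
    (P : Polynomial ℝ) {l : Filter ℝ} (hl : Tendsto (fun x : ℝ => x ^ 2) l atTop) :
    Tendsto (fun x : ℝ => P.eval x * Real.exp (-(N : ℝ) * V.eval x)) l (nhds 0) := by
  set g : ℝ → ℝ := fun x => ∑ k ∈ Finset.range (P.natDegree + 1),
    (|P.coeff k| * K) * (((x ^ 2) ^ k + 1) * Real.exp (-(c * x ^ 2))) with hg
  have hgto : Tendsto g l (nhds 0) := by
    have : Tendsto (fun x : ℝ => ∑ k ∈ Finset.range (P.natDegree + 1),
        (|P.coeff k| * K) * (((x ^ 2) ^ k + 1) * Real.exp (-(c * x ^ 2)))) l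
        (nhds (∑ k ∈ Finset.range (P.natDegree + 1), (|P.coeff k| * K) * ((0 : ℝ) + 0))) := by
      apply tendsto_finset_sum
      intro k _
      apply Tendsto.const_mul
      have he : Tendsto (fun x : ℝ => Real.exp (-(c * x ^ 2))) l (nhds 0) := by
        apply Real.tendsto_exp_atBot.comp
        exact (tendsto_neg_atBot_iff.mpr (hl.const_mul_atTop hc))
      have hp := tendsto_pow_sq_exp hc k hl
      exact ((hp.add he).congr fun x => by ring)
    simpa using this
  apply squeeze_zero_norm _ hgto
  intro x
  have hKe : 0 ≤ K * Real.exp (-(c * x ^ 2)) := (Real.exp_pos _).le.trans (hbd x)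
  rw [Real.norm_eq_abs, abs_mul, abs_of_pos (Real.exp_pos _)]
  calc |P.eval x| * Real.exp (-(N:ℝ) * V.eval x)
      ≤ (∑ k ∈ Finset.range (P.natDegree + 1), |P.coeff k| * ((x ^ 2) ^ k + 1))
          * (K * Real.exp (-(c * x ^ 2))) := by
        apply mul_le_mul (abs_poly_le P x) (hbd x) (Real.exp_pos _).le
        positivity
    _ = g x := by
        rw [hg, Finset.sum_mul]
        apply Finset.sum_congr rfl
        intro k _
        ring

lemma sq_tendsto_atTop : Tendsto (fun x : ℝ => x ^ 2) atTop atTop :=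
  tendsto_pow_atTop (by norm_num)

lemma sq_tendsto_atBot : Tendsto (fun x : ℝ => x ^ 2) atBot atTop := by
  have := sq_tendsto_atTop.comp tendsto_neg_atBot_atTop
  refine this.congr fun x => ?_
  simp [Function.comp]

/-- Integration by parts on the whole line. -/
lemma integral_deriv_weight_zero (N : ℕ) (V : Polynomial ℝ) (c K : ℝ) (hc : 0 < c)
    (hbd : ∀ x : ℝ, Real.exp (-(N : ℝ) * V.eval x) ≤ K * Real.exp (-(c * x ^ 2)))
    (P : Polynomial ℝ) :
    ∫ x : ℝ, ((P.derivative - Polynomial.C (N : ℝ) * (V.derivative * P)).eval x)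
        * Real.exp (-(N : ℝ) * V.eval x) = 0 := by
  set Q : Polynomial ℝ := P.derivative - Polynomial.C (N : ℝ) * (V.derivative * P) with hQ
  set f : ℝ → ℝ := fun x => P.eval x * Real.exp (-(N : ℝ) * V.eval x) with hf
  set f' : ℝ → ℝ := fun x => Q.eval x * Real.exp (-(N : ℝ) * V.eval x) with hf'
  have hderiv : ∀ x : ℝ, HasDerivAt f (f' x) x := by
    intro x
    have h1 : HasDerivAt (fun y : ℝ => -(N : ℝ) * V.eval y) (-(N : ℝ) * V.derivative.eval x) x :=
      (V.hasDerivAt x).const_mul (-(N : ℝ))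
    have h2 := h1.exp
    have h3 := (P.hasDerivAt x).mul h2
    refine HasDerivAt.congr_deriv (f := f) h3 ?_
    rw [hf', hQ]
    simp only [Polynomial.eval_sub, Polynomial.eval_mul, Polynomial.eval_C]
    ring
  have hint : Integrable f' := by
    have := integrable_poly_weight N V c K hc hbd Q
    exact this
  have htop : Tendsto f atTop (nhds 0) :=
    tendsto_poly_weight N V c K hc hbd P sq_tendsto_atTop
  have hbot : Tendsto f atBot (nhds 0) :=
    tendsto_poly_weight N V c K hc hbd P sq_tendsto_atBot
  have h1 : ∫ x in Iic (0:ℝ), f' x = f 0 - 0 :=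
    integral_Iic_of_hasDerivAt_of_tendsto' (fun x _ => hderiv x) hint.integrableOn hbot
  have h2 : ∫ x in Ioi (0:ℝ), f' x = 0 - f 0 :=
    integral_Ioi_of_hasDerivAt_of_tendsto' (fun x _ => hderiv x) hint.integrableOn htop
  have h3 := intervalIntegral.integral_Iic_add_Ioi (b := (0:ℝ)) hint.integrableOn hint.integrableOn
  have : ∫ x : ℝ, f' x = 0 := by rw [← h3, h1, h2]; ring
  exact this

end WaveAux

theorem wave_functions_differential_system
    (N : ℕ) (hN : 1 ≤ N) (V : Polynomial ℝ)
    (hVdeg : 2 ≤ V.natDegree) (hVeven : Even V.natDegree) (hVlead : 0 < V.leadingCoeff)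
    (w : ℝ → ℝ) (hw : ∀ x : ℝ, w x = Real.exp (-(N : ℝ) * V.eval x))
    (p : ℕ → Polynomial ℝ) (hmonic : ∀ n, (p n).Monic) (hdeg : ∀ n, (p n).natDegree = n)
    (h : ℕ → ℝ) (hpos : ∀ n, 0 < h n)
    (horth : ∀ n m : ℕ,
      (∫ x : ℝ, (p n).eval x * (p m).eval x * w x) = if n = m then h n else 0)
    (ψ : ℕ → ℝ → ℝ)
    (hψ : ∀ n : ℕ, ∀ x : ℝ,
      ψ n x = (p n).eval x * Real.exp (-(N : ℝ) * V.eval x / 2) / Real.sqrt (h n)) :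
    ∀ n : ℕ, 1 ≤ n → ∃ A B C D : Polynomial ℝ,
      A.natDegree ≤ V.natDegree - 1 ∧ B.natDegree ≤ V.natDegree - 1 ∧
      C.natDegree ≤ V.natDegree - 1 ∧ D.natDegree ≤ V.natDegree - 1 ∧
      ∀ x : ℝ,
        (-(1 / (N : ℝ)) * deriv (ψ n) x = A.eval x * ψ n x + B.eval x * ψ (n - 1) x) ∧
        (-(1 / (N : ℝ)) * deriv (ψ (n - 1)) x = C.eval x * ψ n x + D.eval x * ψ (n - 1) x) := by
  intro n hn
  obtain ⟨n', rfl⟩ : ∃ n', n = n' + 1 := ⟨n - 1, by omega⟩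
  clear hn
  obtain ⟨c, hc, C0, hq⟩ := WaveAux.quad_lower V hVdeg hVeven hVlead
  have hbd := WaveAux.exp_bound N hN V c C0 hc hq
  set K : ℝ := Real.exp ((N : ℝ) * C0) with hK
  have hNne : (N : ℝ) ≠ 0 := Nat.cast_ne_zero.mpr (by omega)
  have hne : ∀ k, h k ≠ 0 := fun k => (hpos k).ne'
  set I : Polynomial ℝ → ℝ := fun P => ∫ x : ℝ, P.eval x * Real.exp (-(N : ℝ) * V.eval x)
    with hI
  have hint : ∀ P : Polynomial ℝ,
      Integrable fun x : ℝ => P.eval x * Real.exp (-(N : ℝ) * V.eval x) :=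
    WaveAux.integrable_poly_weight N V c K hc hbd
  have I_add : ∀ P Q : Polynomial ℝ, I (P + Q) = I P + I Q := by
    intro P Q
    rw [hI]
    simp only [Polynomial.eval_add, add_mul]
    exact integral_add (hint P) (hint Q)
  have I_smul : ∀ (a : ℝ) (P : Polynomial ℝ), I (Polynomial.C a * P) = a * I P := by
    intro a P
    rw [hI]
    simp only [Polynomial.eval_mul, Polynomial.eval_C, mul_assoc]
    exact integral_const_mul a _
  have I_sub : ∀ P Q : Polynomial ℝ, I (P - Q) = I P - I Q := by
    intro P Q
    have e : P - Q = P + Polynomial.C (-1) * Q := by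
      rw [map_neg, Polynomial.C_1]; ring
    rw [e, I_add, I_smul]; ring
  have I_sum : ∀ (s : Finset ℕ) (f : ℕ → Polynomial ℝ),
      I (∑ j ∈ s, f j) = ∑ j ∈ s, I (f j) := by
    intro s f
    rw [hI]
    simp only [Polynomial.eval_finset_sum]
    simp_rw [Finset.sum_mul]
    exact integral_finset_sum s fun j _ => hint (f j)
  have horth' : ∀ a b : ℕ, I (p a * p b) = if a = b then h a else 0 := by
    intro a b
    have hb := horth a b
    simp only [hw] at hb
    rw [hI]
    simp only [Polynomial.eval_mul]
    exact hb
  have hp0 : p 0 = 1 := by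
    have h0 : (p 0).natDegree = 0 := hdeg 0
    have he := Polynomial.eq_C_of_natDegree_le_zero (le_of_eq h0)
    have hlc := (hmonic 0).coeff_natDegree
    rw [h0] at hlc
    rw [he, hlc, Polynomial.C_1]
  -- orthogonality to all lower-degree polynomials
  have hlow : ∀ m : ℕ, ∀ q : Polynomial ℝ, q.natDegree < m → I (p m * q) = 0 := by
    intro m
    suffices H : ∀ k : ℕ, ∀ q : Polynomial ℝ, q.natDegree < m → q.natDegree ≤ k →
        I (p m * q) = 0 by
      exact fun q hq => H q.natDegree q hq le_rfl
    intro k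
    induction k with
    | zero =>
      intro q hq hq0
      have hqC := Polynomial.eq_C_of_natDegree_le_zero hq0
      have e : p m * q = Polynomial.C (q.coeff 0) * (p m * p 0) := by
        rw [hp0, mul_one]
        conv_lhs => rw [hqC]
        ring
      rw [e, I_smul, horth' m 0, if_neg (by omega)]
      ring
    | succ k ih =>
      intro q hq hqk
      rcases eq_or_ne q 0 with rfl | hq0
      · rw [mul_zero, hI]; simp
      · set s := q.natDegree with hs
        set lc := q.leadingCoeff with hlc
        have hlcne : lc ≠ 0 := Polynomial.leadingCoeff_ne_zero.mpr hq0
        set q' := q - Polynomial.C lc * p s with hq'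
        have hdegeq : q.degree = (Polynomial.C lc * p s).degree := by
          rw [Polynomial.degree_C_mul hlcne, Polynomial.degree_eq_natDegree hq0,
            Polynomial.degree_eq_natDegree (hmonic s).ne_zero, hdeg]
        have hlceq : q.leadingCoeff = (Polynomial.C lc * p s).leadingCoeff := by
          rw [Polynomial.leadingCoeff_mul, Polynomial.leadingCoeff_C,
            (hmonic s).leadingCoeff, mul_one]
        have hq'lt : q'.degree < q.degree := Polynomial.degree_sub_lt hdegeq hq0 hlceq
        have e : p m * q = p m * q' + Polynomial.C lc * (p m * p s) := by
          rw [hq']; ring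
        have hms : I (p m * p s) = 0 := by rw [horth', if_neg (by omega)]
        rcases eq_or_ne q' 0 with hq'0 | hq'0
        · rw [e, hq'0, mul_zero, I_add, I_smul, hms, hI]; simp
        · have hq'deg : q'.natDegree < s := by
            have := (Polynomial.natDegree_lt_iff_degree_lt hq'0).mpr
              (hq'lt.trans_le (Polynomial.degree_eq_natDegree hq0).le)
            omega
          rw [e, I_add, I_smul, hms, ih q' (by omega) (by omega)]
          ring
  -- span by the monic basis
  have hspan : ∀ (k : ℕ) (q : Polynomial ℝ), q.natDegree ≤ k →
      ∃ f : ℕ → ℝ, q = ∑ j ∈ Finset.range (k + 1), Polynomial.C (f j) * p j := by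
    intro k
    induction k with
    | zero =>
      intro q hq
      refine ⟨fun _ => q.coeff 0, ?_⟩
      rw [Finset.sum_range_one, hp0, mul_one]
      exact Polynomial.eq_C_of_natDegree_le_zero hq
    | succ k ih =>
      intro q hq
      set cc := q.coeff (k + 1) with hcc
      set q' := q - Polynomial.C cc * p (k + 1) with hq'
      have hq'deg : q'.natDegree ≤ k := by
        rw [Polynomial.natDegree_le_iff_coeff_eq_zero]
        intro i hi
        rw [hq', Polynomial.coeff_sub, Polynomial.coeff_C_mul]
        rcases eq_or_lt_of_le (Nat.succ_le_of_lt hi) with he | hlt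
        · rw [← he]
          have hpc : (p (k + 1)).coeff (k + 1) = 1 := by
            have hh := (hmonic (k + 1)).coeff_natDegree
            rwa [hdeg] at hh
          rw [hpc, ← hcc]; ring
        · have h1 : q.coeff i = 0 := Polynomial.coeff_eq_zero_of_natDegree_lt (by omega)
          have h2 : (p (k + 1)).coeff i = 0 :=
            Polynomial.coeff_eq_zero_of_natDegree_lt (by rw [hdeg]; omega)
          rw [h1, h2]; ring
      obtain ⟨f, hf⟩ := ih q' hq'deg
      refine ⟨Function.update f (k + 1) cc, ?_⟩
      rw [Finset.sum_range_succ, Function.update_self]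
      have e : ∑ j ∈ Finset.range (k + 1), Polynomial.C (Function.update f (k + 1) cc j) * p j
          = ∑ j ∈ Finset.range (k + 1), Polynomial.C (f j) * p j := by
        apply Finset.sum_congr rfl
        intro j hj
        rw [Function.update_of_ne (by have := Finset.mem_range.mp hj; omega)]
      rw [e, ← hf, hq']
      ring
  -- coefficients via integrals
  have hcoeff : ∀ (m : ℕ) (f : ℕ → ℝ) (q : Polynomial ℝ),
      q = ∑ j ∈ Finset.range (m + 1), Polynomial.C (f j) * p j →
      ∀ j, j ≤ m → I (q * p j) = f j * h j := by
    intro m f q hqe j hj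
    have e1 : q * p j = ∑ i ∈ Finset.range (m + 1), Polynomial.C (f i) * (p i * p j) := by
      rw [hqe, Finset.sum_mul]
      apply Finset.sum_congr rfl
      intros; ring
    rw [e1, I_sum]
    have e2 : ∀ i ∈ Finset.range (m + 1),
        I (Polynomial.C (f i) * (p i * p j)) = if i = j then f i * h i else 0 := by
      intro i _
      rw [I_smul, horth']
      split <;> simp
    rw [Finset.sum_congr rfl e2, Finset.sum_ite_eq' (Finset.range (m + 1)) j
      (fun i => f i * h i), if_pos (Finset.mem_range.mpr (by omega))]
  -- integration by parts
  have hIBP : ∀ P : Polynomial ℝ,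
      I (Polynomial.derivative P) = (N : ℝ) * I (Polynomial.derivative V * P) := by
    intro P
    have h0 := WaveAux.integral_deriv_weight_zero N V c K hc hbd P
    have h1 : I (Polynomial.derivative P
        - Polynomial.C (N : ℝ) * (Polynomial.derivative V * P)) = 0 := h0
    rw [I_sub, I_smul] at h1
    linarith
  -- degree reduction bound for X * p k - p (k+1)
  have hsubdeg : ∀ k : ℕ, ((Polynomial.X : Polynomial ℝ) * p k - p (k + 1)).natDegree ≤ k := by
    intro k
    have hm1 : ((Polynomial.X : Polynomial ℝ) * p k).Monic := Polynomial.monic_X.mul (hmonic k)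
    have hnd1 : ((Polynomial.X : Polynomial ℝ) * p k).natDegree = k + 1 := by
      rw [Polynomial.monic_X.natDegree_mul (hmonic k), Polynomial.natDegree_X, hdeg]
      omega
    have hdegeq : ((Polynomial.X : Polynomial ℝ) * p k).degree = (p (k + 1)).degree := by
      rw [Polynomial.degree_eq_natDegree hm1.ne_zero,
        Polynomial.degree_eq_natDegree (hmonic (k + 1)).ne_zero, hnd1, hdeg]
    have hlt := Polynomial.degree_sub_lt hdegeq hm1.ne_zero
      (by rw [hm1.leadingCoeff, (hmonic (k + 1)).leadingCoeff])
    rw [Polynomial.degree_eq_natDegree hm1.ne_zero, hnd1] at hlt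
    rcases eq_or_ne ((Polynomial.X : Polynomial ℝ) * p k - p (k + 1)) 0 with h0 | h0
    · rw [h0]; simp
    · have := (Polynomial.natDegree_lt_iff_degree_lt h0).mpr hlt
      omega
  -- three-term recurrence
  have hrec : ∀ k : ℕ, ∃ a : ℝ, (Polynomial.X : Polynomial ℝ) * p (k + 1)
      = p (k + 2) + Polynomial.C a * p (k + 1) + Polynomial.C (h (k + 1) / h k) * p k := by
    intro k
    set R := (Polynomial.X : Polynomial ℝ) * p (k + 1) - p (k + 2) with hR
    have hRnd : R.natDegree ≤ k + 1 := hsubdeg (k + 1)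
    obtain ⟨f, hf⟩ := hspan (k + 1) R hRnd
    have hfj : ∀ j, j ≤ k + 1 → I (R * p j) = f j * h j := hcoeff (k + 1) f R hf
    have hRj : ∀ j, j < k → f j = 0 := by
      intro j hj
      have e1 : R * p j = p (k + 1) * (Polynomial.X * p j) - p (k + 2) * p j := by
        rw [hR]; ring
      have e3 : I (p (k + 1) * (Polynomial.X * p j)) = 0 := by
        apply hlow
        rw [Polynomial.monic_X.natDegree_mul (hmonic j), Polynomial.natDegree_X, hdeg]
        omega
      have e4 : I (p (k + 2) * p j) = 0 := by rw [horth', if_neg (by omega)]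
      have e5 := hfj j (by omega)
      rw [e1, I_sub, e3, e4] at e5
      have e6 : f j * h j = 0 := by linarith
      exact (mul_eq_zero.mp e6).resolve_right (hne j)
    have hfk : f k = h (k + 1) / h k := by
      set r := (Polynomial.X : Polynomial ℝ) * p k - p (k + 1) with hr
      have e1 : R * p k = p (k + 1) * (Polynomial.X * p k) - p (k + 2) * p k := by
        rw [hR]; ring
      have e2 : I (p (k + 1) * (Polynomial.X * p k)) = h (k + 1) := by
        have e : p (k + 1) * (Polynomial.X * p k) = p (k + 1) * p (k + 1) + p (k + 1) * r := by
          rw [hr]; ring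
        have hrd : r.natDegree ≤ k := hsubdeg k
        rw [e, I_add, horth', if_pos rfl, hlow (k + 1) r (by omega)]
        ring
      have e5 := hfj k (by omega)
      rw [e1, I_sub, e2, horth', if_neg (by omega)] at e5
      rw [eq_div_iff (hne k)]
      linarith
    refine ⟨f (k + 1), ?_⟩
    have hsum : R = Polynomial.C (f (k + 1)) * p (k + 1) + Polynomial.C (f k) * p k
        + ∑ j ∈ Finset.range k, Polynomial.C (f j) * p j := by
      rw [hf, Finset.sum_range_succ, Finset.sum_range_succ]; ring
    have hzero : ∑ j ∈ Finset.range k, Polynomial.C (f j) * p j = 0 := by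
      apply Finset.sum_eq_zero
      intro j hj
      rw [hRj j (Finset.mem_range.mp hj)]
      simp
    have e : (Polynomial.X : Polynomial ℝ) * p (k + 1) = p (k + 2) + R := by rw [hR]; ring
    rw [e, hsum, hzero, hfk]
    ring
  -- upward representation
  have hup : ∀ j : ℕ, ∃ A B : Polynomial ℝ, A.natDegree ≤ j - 1 ∧ B.natDegree ≤ j - 1 ∧
      p (n' + j) = A * p (n' + 1) + B * p n' := by
    intro j
    induction j using Nat.strong_induction_on with
    | _ j ih =>
      match j with
      | 0 => exact ⟨0, 1, by simp, by simp, by simp⟩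
      | 1 => exact ⟨1, 0, by simp, by simp, by simp⟩
      | (j + 2) =>
        obtain ⟨a, ha⟩ := hrec (n' + j)
        obtain ⟨A1, B1, hA1, hB1, hP1⟩ := ih (j + 1) (by omega)
        obtain ⟨A0, B0, hA0, hB0, hP0⟩ := ih j (by omega)
        have hidx1 : n' + (j + 1) = n' + j + 1 := by omega
        have hidx2 : n' + (j + 2) = n' + j + 2 := by omega
        rw [hidx1] at hP1
        refine ⟨(Polynomial.X - Polynomial.C a) * A1
            - Polynomial.C (h (n' + j + 1) / h (n' + j)) * A0,
          (Polynomial.X - Polynomial.C a) * B1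
            - Polynomial.C (h (n' + j + 1) / h (n' + j)) * B0, ?_, ?_, ?_⟩
        · refine (Polynomial.natDegree_sub_le _ _).trans ?_
          have hm := Polynomial.natDegree_mul_le
            (p := Polynomial.X - Polynomial.C a) (q := A1)
          have h1 := Polynomial.natDegree_X_sub_C a
          have h2 := Polynomial.natDegree_C_mul_le (h (n' + j + 1) / h (n' + j)) A0
          simp only [max_le_iff]
          omega
        · refine (Polynomial.natDegree_sub_le _ _).trans ?_
          have hm := Polynomial.natDegree_mul_le
            (p := Polynomial.X - Polynomial.C a) (q := B1)
          have h1 := Polynomial.natDegree_X_sub_C a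
          have h2 := Polynomial.natDegree_C_mul_le (h (n' + j + 1) / h (n' + j)) B0
          simp only [max_le_iff]
          omega
        · have hstep : p (n' + j + 2) = (Polynomial.X - Polynomial.C a) * p (n' + j + 1)
              - Polynomial.C (h (n' + j + 1) / h (n' + j)) * p (n' + j) := by
            linear_combination -ha
          rw [hidx2, hstep, hP1, hP0]
          ring
  -- downward representation
  have hdown : ∀ i : ℕ, ∀ k : ℕ, k + i = n' →
      ∃ A B : Polynomial ℝ, A.natDegree ≤ i ∧ B.natDegree ≤ i ∧
        p k = A * p (n' + 1) + B * p n' := by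
    intro i
    induction i using Nat.strong_induction_on with
    | _ i ih =>
      match i with
      | 0 =>
        intro k hk
        refine ⟨0, 1, by simp, by simp, ?_⟩
        rw [show k = n' by omega]
        simp
      | 1 =>
        intro k hk
        obtain ⟨a, ha⟩ := hrec k
        set b := h (k + 1) / h k with hbdef
        have hbne : b ≠ 0 := div_ne_zero (hne _) (hne _)
        have hCb : Polynomial.C b⁻¹ * Polynomial.C b = 1 := by
          rw [← Polynomial.C_mul, inv_mul_cancel₀ hbne, Polynomial.C_1]
        have h5 : Polynomial.C b * p k
            = (Polynomial.X - Polynomial.C a) * p (k + 1) - p (k + 2) := by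
          linear_combination -ha
        have hpk : p k = Polynomial.C b⁻¹
            * ((Polynomial.X - Polynomial.C a) * p (k + 1) - p (k + 2)) := by
          rw [← h5, ← mul_assoc, hCb, one_mul]
        rw [show k + 1 = n' by omega, show k + 2 = n' + 1 by omega] at hpk
        refine ⟨Polynomial.C b⁻¹ * (-1),
          Polynomial.C b⁻¹ * (Polynomial.X - Polynomial.C a), ?_, ?_, ?_⟩
        · refine (Polynomial.natDegree_C_mul_le _ _).trans ?_
          simp
        · refine (Polynomial.natDegree_C_mul_le _ _).trans ?_
          rw [Polynomial.natDegree_X_sub_C]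
        · rw [hpk]; ring
      | (i + 2) =>
        intro k hk
        obtain ⟨a, ha⟩ := hrec k
        obtain ⟨A1, B1, hA1, hB1, hP1⟩ := ih (i + 1) (by omega) (k + 1) (by omega)
        obtain ⟨A2, B2, hA2, hB2, hP2⟩ := ih i (by omega) (k + 2) (by omega)
        set b := h (k + 1) / h k with hbdef
        have hbne : b ≠ 0 := div_ne_zero (hne _) (hne _)
        have hCb : Polynomial.C b⁻¹ * Polynomial.C b = 1 := by
          rw [← Polynomial.C_mul, inv_mul_cancel₀ hbne, Polynomial.C_1]
        have h5 : Polynomial.C b * p k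
            = (Polynomial.X - Polynomial.C a) * p (k + 1) - p (k + 2) := by
          linear_combination -ha
        have hpk : p k = Polynomial.C b⁻¹
            * ((Polynomial.X - Polynomial.C a) * p (k + 1) - p (k + 2)) := by
          rw [← h5, ← mul_assoc, hCb, one_mul]
        refine ⟨Polynomial.C b⁻¹ * ((Polynomial.X - Polynomial.C a) * A1 - A2),
          Polynomial.C b⁻¹ * ((Polynomial.X - Polynomial.C a) * B1 - B2), ?_, ?_, ?_⟩
        · refine (Polynomial.natDegree_C_mul_le _ _).trans ?_
          refine (Polynomial.natDegree_sub_le _ _).trans ?_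
          have hm := Polynomial.natDegree_mul_le
            (p := Polynomial.X - Polynomial.C a) (q := A1)
          have h1 := Polynomial.natDegree_X_sub_C a
          simp only [max_le_iff]
          omega
        · refine (Polynomial.natDegree_C_mul_le _ _).trans ?_
          refine (Polynomial.natDegree_sub_le _ _).trans ?_
          have hm := Polynomial.natDegree_mul_le
            (p := Polynomial.X - Polynomial.C a) (q := B1)
          have h1 := Polynomial.natDegree_X_sub_C a
          simp only [max_le_iff]
          omega
        · rw [hpk, hP1, hP2]; ring
  -- the polynomial Q m
  set Q : ℕ → Polynomial ℝ := fun m => Polynomial.C (1 / 2 : ℝ)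
      * (Polynomial.derivative V * p m)
      - Polynomial.C (1 / (N : ℝ)) * Polynomial.derivative (p m) with hQdef
  have hQdeg : ∀ m, (Q m).natDegree ≤ V.natDegree - 1 + m := by
    intro m
    refine (Polynomial.natDegree_sub_le _ _).trans ?_
    simp only [max_le_iff]
    constructor
    · refine (Polynomial.natDegree_C_mul_le _ _).trans ?_
      refine Polynomial.natDegree_mul_le.trans ?_
      have h1 := Polynomial.natDegree_derivative_le V
      have h2 := hdeg m
      omega
    · refine (Polynomial.natDegree_C_mul_le _ _).trans ?_
      have h1 := Polynomial.natDegree_derivative_le (p m)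
      have h2 := hdeg m
      omega
  have horthQ : ∀ m j : ℕ, j + V.natDegree ≤ m → I (Q m * p j) = 0 := by
    intro m j hj
    have e1 : Q m * p j = Polynomial.C (1 / 2 : ℝ)
        * (p m * (Polynomial.derivative V * p j))
        - Polynomial.C (1 / (N : ℝ)) * (Polynomial.derivative (p m) * p j) := by
      rw [hQdef]; ring
    have e2 : I (p m * (Polynomial.derivative V * p j)) = 0 := by
      apply hlow
      have h1 := Polynomial.natDegree_mul_le (p := Polynomial.derivative V) (q := p j)
      have h2 := Polynomial.natDegree_derivative_le V
      have h3 := hdeg j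
      omega
    have e3 : I (Polynomial.derivative (p m) * p j) = 0 := by
      have hI1 := hIBP (p m * p j)
      rw [Polynomial.derivative_mul, I_add] at hI1
      have e5 : I (p m * Polynomial.derivative (p j)) = 0 := by
        apply hlow
        have h1 := Polynomial.natDegree_derivative_le (p j)
        have h2 := hdeg j
        omega
      have e6 : I (Polynomial.derivative V * (p m * p j)) = 0 := by
        have e : Polynomial.derivative V * (p m * p j)
            = p m * (Polynomial.derivative V * p j) := by ring
        rw [e]; exact e2
      rw [e5, e6] at hI1
      linarith
    rw [e1, I_sub, I_smul, I_smul, e2, e3]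
    ring
  -- assembly
  have hassemble : ∀ m : ℕ, m = n' ∨ m = n' + 1 →
      ∃ A B : Polynomial ℝ, A.natDegree ≤ V.natDegree - 1 ∧ B.natDegree ≤ V.natDegree - 1 ∧
        Q m = A * p (n' + 1) + B * p n' := by
    intro m hm
    have hmge : n' ≤ m ∧ m ≤ n' + 1 := by rcases hm with rfl | rfl <;> omega
    have hQd : (Q m).natDegree ≤ n' + V.natDegree := by
      have := hQdeg m
      omega
    obtain ⟨f, hf⟩ := hspan (n' + V.natDegree) (Q m) hQd
    have hfzero : ∀ j, j + V.natDegree ≤ m → f j = 0 := by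
      intro j hj
      have h1 := hcoeff (n' + V.natDegree) f (Q m) hf j (by omega)
      rw [horthQ m j hj] at h1
      exact (mul_eq_zero.mp h1.symm).resolve_right (hne j)
    have hterm : ∀ j : ℕ, ∃ A B : Polynomial ℝ,
        A.natDegree ≤ V.natDegree - 1 ∧ B.natDegree ≤ V.natDegree - 1 ∧
        (j ≤ n' + V.natDegree → Polynomial.C (f j) * p j = A * p (n' + 1) + B * p n') := by
      intro j
      by_cases hjle : j ≤ n' + V.natDegree
      · by_cases hcase : j + V.natDegree ≤ m
        · refine ⟨0, 0, by simp, by simp, fun _ => ?_⟩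
          rw [hfzero j hcase]; simp
        · push_neg at hcase
          rcases le_or_gt j n' with hjn | hjn
          · obtain ⟨A, B, hA, hB, hP⟩ := hdown (n' - j) j (by omega)
            refine ⟨Polynomial.C (f j) * A, Polynomial.C (f j) * B, ?_, ?_, fun _ => ?_⟩
            · exact (Polynomial.natDegree_C_mul_le _ _).trans (by omega)
            · exact (Polynomial.natDegree_C_mul_le _ _).trans (by omega)
            · rw [hP]; ring
          · obtain ⟨A, B, hA, hB, hP⟩ := hup (j - n')
            have hidx : n' + (j - n') = j := by omega
            rw [hidx] at hP
            refine ⟨Polynomial.C (f j) * A, Polynomial.C (f j) * B, ?_, ?_, fun _ => ?_⟩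
            · exact (Polynomial.natDegree_C_mul_le _ _).trans (by omega)
            · exact (Polynomial.natDegree_C_mul_le _ _).trans (by omega)
            · rw [hP]; ring
      · exact ⟨0, 0, by simp, by simp, fun hcon => absurd hcon hjle⟩
    choose FA FB hFA hFB hFeq using hterm
    refine ⟨∑ j ∈ Finset.range (n' + V.natDegree + 1), FA j,
      ∑ j ∈ Finset.range (n' + V.natDegree + 1), FB j, ?_, ?_, ?_⟩
    · exact Polynomial.natDegree_sum_le_of_forall_le _ _ fun j _ => hFA j
    · exact Polynomial.natDegree_sum_le_of_forall_le _ _ fun j _ => hFB j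
    · rw [hf, Finset.sum_congr rfl
        (fun j hj => hFeq j (Nat.lt_succ_iff.mp (Finset.mem_range.mp hj)))]
      rw [Finset.sum_add_distrib, ← Finset.sum_mul, ← Finset.sum_mul]
  obtain ⟨A, B0, hA, hB0, hQn1⟩ := hassemble (n' + 1) (Or.inr rfl)
  obtain ⟨C0, D, hC0, hD, hQn0⟩ := hassemble n' (Or.inl rfl)
  have hs1 : 0 < Real.sqrt (h (n' + 1)) := Real.sqrt_pos.mpr (hpos _)
  have hs0 : 0 < Real.sqrt (h n') := Real.sqrt_pos.mpr (hpos _)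
  refine ⟨A, Polynomial.C (Real.sqrt (h n') / Real.sqrt (h (n' + 1))) * B0,
    Polynomial.C (Real.sqrt (h (n' + 1)) / Real.sqrt (h n')) * C0, D,
    hA, (Polynomial.natDegree_C_mul_le _ _).trans hB0,
    (Polynomial.natDegree_C_mul_le _ _).trans hC0, hD, ?_⟩
  intro x
  simp only [Nat.add_sub_cancel]
  have hψm : ∀ m : ℕ, ψ m = fun y : ℝ =>
      (p m).eval y * Real.exp (-(N : ℝ) * V.eval y / 2) / Real.sqrt (h m) :=
    fun m => funext (hψ m)
  have hDer : ∀ m : ℕ, deriv (ψ m) x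
      = ((Polynomial.derivative (p m)).eval x * Real.exp (-(N : ℝ) * V.eval x / 2)
        + (p m).eval x * (Real.exp (-(N : ℝ) * V.eval x / 2)
          * (-(N : ℝ) * (Polynomial.derivative V).eval x / 2))) / Real.sqrt (h m) := by
    intro m
    rw [hψm m]
    have h1 : HasDerivAt (fun y : ℝ => -(N : ℝ) * V.eval y / 2)
        (-(N : ℝ) * (Polynomial.derivative V).eval x / 2) x :=
      ((V.hasDerivAt x).const_mul (-(N : ℝ))).div_const 2
    have h2 := h1.exp
    have h3 := ((p m).hasDerivAt x).mul h2
    exact (h3.div_const (Real.sqrt (h m))).deriv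
  have hkey1 := congrArg (Polynomial.eval x) hQn1
  have hkey0 := congrArg (Polynomial.eval x) hQn0
  simp only [hQdef, Polynomial.eval_sub, Polynomial.eval_mul, Polynomial.eval_add,
    Polynomial.eval_C] at hkey1 hkey0
  set E := Real.exp (-(N : ℝ) * V.eval x / 2) with hE
  constructor
  · have lhs_eq : -(1 / (N : ℝ)) * deriv (ψ (n' + 1)) x
        = (1 / 2 * ((Polynomial.derivative V).eval x * (p (n' + 1)).eval x)
          - 1 / (N : ℝ) * (Polynomial.derivative (p (n' + 1))).eval x) * E
            / Real.sqrt (h (n' + 1)) := by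
      rw [hDer (n' + 1)]
      field_simp
      ring
    have rhs_eq : A.eval x * ψ (n' + 1) x
        + (Polynomial.C (Real.sqrt (h n') / Real.sqrt (h (n' + 1))) * B0).eval x * ψ n' x
        = (A.eval x * (p (n' + 1)).eval x + B0.eval x * (p n').eval x) * E
            / Real.sqrt (h (n' + 1)) := by
      rw [hψ (n' + 1) x, hψ n' x]
      simp only [Polynomial.eval_mul, Polynomial.eval_C, ← hE]
      field_simp
    rw [lhs_eq, rhs_eq, hkey1]
  · have lhs_eq : -(1 / (N : ℝ)) * deriv (ψ n') x
        = (1 / 2 * ((Polynomial.derivative V).eval x * (p n').eval x)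
          - 1 / (N : ℝ) * (Polynomial.derivative (p n')).eval x) * E
            / Real.sqrt (h n') := by
      rw [hDer n']
      field_simp
      ring
    have rhs_eq : (Polynomial.C (Real.sqrt (h (n' + 1)) / Real.sqrt (h n')) * C0).eval x
          * ψ (n' + 1) x + D.eval x * ψ n' x
        = (C0.eval x * (p (n' + 1)).eval x + D.eval x * (p n').eval x) * E
            / Real.sqrt (h n') := by
      rw [hψ (n' + 1) x, hψ n' x]
      simp only [Polynomial.eval_mul, Polynomial.eval_C, ← hE]
      field_simp
    rw [lhs_eq, rhs_eq, hkey0]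
end

section
/- Convergence of the Riemann theta series: let g ≥ 1, let τ be a symmetric g×g complex matrix whose imaginary part is positive definite, and let u ∈ ℂ^g. Then the family m ↦ exp(iπ·mᵀτm + 2iπ·mᵀu), indexed by m ∈ ℤ^g, is absolutely summable, so the theta function θ(u,τ) = Σ_{m∈ℤ^g} exp(iπ·mᵀτm + 2iπ·mᵀu) is well defined. -/
open Matrix


lemma aux_exp_abs : Summable (fun k : ℤ => Real.exp (-|(k:ℝ)|)) := by
  rw [summable_int_iff_summable_nat_and_neg]
  have h : Summable (fun n : ℕ => Real.exp (-(n:ℝ))) := by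
    simpa [Real.exp_neg, Real.exp_nat_mul, ← Real.exp_neg] using
      summable_geometric_of_lt_one (Real.exp_pos (-1)).le
        (Real.exp_lt_one_iff.mpr (by norm_num)) |>.congr (fun n => by
          rw [← Real.exp_nat_mul]; ring_nf)
  constructor <;> · apply h.congr; intro n; simp

lemma aux_one_dim (a b : ℝ) (ha : 0 < a) :
    Summable (fun k : ℤ => Real.exp (-a * (k:ℝ)^2 + b * |(k:ℝ)|)) := by
  refine Summable.of_nonneg_of_le (fun k => (Real.exp_pos _).le)
    (fun k => ?_) (aux_exp_abs.mul_left (Real.exp ((b+1)^2/(4*a))))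
  rw [← Real.exp_add]
  apply Real.exp_le_exp.mpr
  have h := abs_nonneg (k:ℝ)
  have h2 : (k:ℝ)^2 = |(k:ℝ)|^2 := (sq_abs _).symm
  have hid : (b+1)^2/(4*a)*(4*a) = (b+1)^2 := div_mul_cancel₀ _ (by positivity)
  rw [h2]
  nlinarith [sq_nonneg (2*a*|(k:ℝ)| - (b+1)), ha, mul_pos ha ha]

lemma aux_pi_prod : ∀ (n : ℕ) (f : Fin n → ℤ → ℝ), (∀ i k, 0 ≤ f i k) → (∀ i, Summable (f i)) →
    Summable (fun m : Fin n → ℤ => ∏ i, f i (m i)) := by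
  intro n
  induction n with
  | zero => intro f _ _; simpa using summable_of_finite_support (Set.toFinite _)
  | succ n ih =>
    intro f h0 hf
    have hs : Summable (fun m : Fin n → ℤ => ∏ i, f i.succ (m i)) :=
      ih (fun i => f i.succ) (fun i k => h0 _ _) (fun i => hf _)
    have key := Summable.mul_of_nonneg (hf 0) hs
        (fun k => h0 0 k) (fun m => Finset.prod_nonneg fun i _ => h0 _ _)
    rw [← (Fin.consEquiv (fun _ : Fin (n+1) => ℤ)).summable_iff]
    apply key.congr
    intro p
    simp only [Function.comp_apply, Fin.consEquiv, Equiv.coe_fn_mk]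
    rw [Fin.prod_univ_succ]
    simp

lemma aux_quad_lower (g : ℕ) (hg : 1 ≤ g) (A : Matrix (Fin g) (Fin g) ℝ)
    (hpd : ∀ v : Fin g → ℝ, v ≠ 0 → 0 < ∑ i : Fin g, ∑ j : Fin g, v i * A i j * v j) :
    ∃ c > 0, ∀ v : Fin g → ℝ,
      c * (∑ i : Fin g, (v i)^2) ≤ ∑ i : Fin g, ∑ j : Fin g, v i * A i j * v j := by
  haveI : Nonempty (Fin g) := ⟨⟨0, hg⟩⟩
  set E := EuclideanSpace ℝ (Fin g)
  set Q : E → ℝ := fun v => ∑ i : Fin g, ∑ j : Fin g, v i * A i j * v j with hQdef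
  have hQcont : Continuous Q := by
    apply continuous_finset_sum
    intro i _
    apply continuous_finset_sum
    intro j _
    exact (((EuclideanSpace.proj i).continuous).mul continuous_const).mul
      ((EuclideanSpace.proj j).continuous)
  have hsph : IsCompact (Metric.sphere (0:E) 1) := isCompact_sphere 0 1
  have hne : (Metric.sphere (0:E) 1).Nonempty := NormedSpace.sphere_nonempty.mpr zero_le_one
  obtain ⟨v0, hv0mem, hv0min'⟩ := hsph.exists_isMinOn hne hQcont.continuousOn
  have hv0min : ∀ w ∈ Metric.sphere (0:E) 1, Q v0 ≤ Q w := fun w hw => hv0min' hw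
  have hv0ne : v0 ≠ 0 := by
    intro h
    have := mem_sphere_zero_iff_norm.mp hv0mem
    rw [h, norm_zero] at this; norm_num at this
  have hc : 0 < Q v0 := hpd v0 (fun h => hv0ne (by simpa using congrArg (WithLp.toLp 2) h))
  have hhom : ∀ (s : ℝ) (v : E), Q (s • v) = s^2 * Q v := by
    intro s v
    rw [hQdef, Finset.mul_sum]
    refine Finset.sum_congr rfl fun i _ => ?_
    rw [Finset.mul_sum]
    refine Finset.sum_congr rfl fun j _ => ?_
    show (s * v i) * A i j * (s * v j) = _
    ring
  have hnorm : ∀ v : E, ‖v‖^2 = ∑ i, (v i)^2 := by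
    intro v
    rw [EuclideanSpace.norm_eq, Real.sq_sqrt (by positivity)]
    exact Finset.sum_congr rfl fun i _ => by rw [Real.norm_eq_abs, sq_abs]
  refine ⟨Q v0, hc, fun v => ?_⟩
  by_cases hv : v = 0
  · subst hv
    simp [hQdef]
  · have hwne : (WithLp.toLp 2 v : E) ≠ 0 := fun h => hv (by simpa using congrArg WithLp.ofLp h)
    set w : E := WithLp.toLp 2 v with hw
    have hnv : 0 < ‖w‖ := norm_pos_iff.mpr hwne
    have hmem : ‖w‖⁻¹ • w ∈ Metric.sphere (0:E) 1 := by
      rw [mem_sphere_zero_iff_norm, norm_smul, norm_inv, norm_norm]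
      field_simp
    have h1 := hv0min _ hmem
    rw [hhom] at h1
    have h2 : Q v0 * ‖w‖^2 ≤ Q w := by
      have := mul_le_mul_of_nonneg_right h1 (sq_nonneg ‖w‖)
      calc Q v0 * ‖w‖^2 ≤ (‖w‖⁻¹)^2 * Q w * ‖w‖^2 := this
        _ = Q w := by field_simp
    have final : Q v0 * ∑ i, (w i)^2 ≤ Q w := by rw [← hnorm]; exact h2
    exact final

theorem riemann_theta_series_absolutely_summable
    (g : ℕ) (hg : 1 ≤ g) (τ : Matrix (Fin g) (Fin g) ℂ) (hsym : τ.IsSymm)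
    (hpd : ∀ v : Fin g → ℝ, v ≠ 0 → 0 < ∑ i : Fin g, ∑ j : Fin g, v i * (τ i j).im * v j)
    (u : Fin g → ℂ) :
    Summable (fun m : Fin g → ℤ =>
      ‖Complex.exp ((Real.pi : ℂ) * Complex.I
            * (∑ i : Fin g, ∑ j : Fin g, (m i : ℂ) * τ i j * (m j : ℂ))
          + 2 * (Real.pi : ℂ) * Complex.I * ∑ i : Fin g, (m i : ℂ) * u i)‖) := by
  obtain ⟨c, hc, hQ⟩ := aux_quad_lower g hg (fun i j => (τ i j).im) hpd
  have hπ := Real.pi_pos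
  set f : Fin g → ℤ → ℝ := fun i k =>
    Real.exp (-(Real.pi * c) * (k:ℝ)^2 + (2 * Real.pi * |(u i).im|) * |(k:ℝ)|) with hf
  have hsum : Summable (fun m : Fin g → ℤ => ∏ i, f i (m i)) :=
    aux_pi_prod g f (fun i k => (Real.exp_pos _).le)
      (fun i => aux_one_dim _ _ (by positivity))
  refine Summable.of_nonneg_of_le (fun m => norm_nonneg _) (fun m => ?_) hsum
  rw [Complex.norm_exp]
  have hre : ((Real.pi : ℂ) * Complex.I
            * (∑ i : Fin g, ∑ j : Fin g, (m i : ℂ) * τ i j * (m j : ℂ))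
          + 2 * (Real.pi : ℂ) * Complex.I * ∑ i : Fin g, (m i : ℂ) * u i).re
      = -(Real.pi * ∑ i : Fin g, ∑ j : Fin g, (m i : ℝ) * (τ i j).im * (m j : ℝ))
        - 2 * Real.pi * ∑ i : Fin g, (m i : ℝ) * (u i).im := by
    simp [Complex.add_re, Complex.mul_re, Complex.mul_im, Complex.re_sum, Complex.im_sum,
      Complex.mul_im, Finset.mul_sum]
    ring
  rw [hre]
  have hprod : ∏ i, f i (m i) = Real.exp (∑ i : Fin g,
      (-(Real.pi * c) * ((m i:ℤ):ℝ)^2 + (2 * Real.pi * |(u i).im|) * |((m i:ℤ):ℝ)|)) := by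
    rw [Real.exp_sum]
  rw [hprod]
  apply Real.exp_le_exp.mpr
  have hquad : Real.pi * c * (∑ i : Fin g, ((m i : ℝ))^2)
      ≤ Real.pi * ∑ i : Fin g, ∑ j : Fin g, (m i : ℝ) * (τ i j).im * (m j : ℝ) := by
    rw [mul_assoc]
    exact mul_le_mul_of_nonneg_left (hQ (fun i => (m i : ℝ))) hπ.le
  have hlin : -(2 * Real.pi * ∑ i : Fin g, (m i : ℝ) * (u i).im)
      ≤ 2 * Real.pi * ∑ i : Fin g, |(u i).im| * |(m i : ℝ)| := by
    rw [neg_mul_eq_mul_neg, ← Finset.sum_neg_distrib]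
    apply mul_le_mul_of_nonneg_left _ (by positivity)
    apply Finset.sum_le_sum
    intro i _
    calc -((m i : ℝ) * (u i).im) ≤ |(m i : ℝ) * (u i).im| := neg_le_abs _
      _ = |(u i).im| * |(m i : ℝ)| := by rw [abs_mul, mul_comm]
  rw [Finset.sum_add_distrib]
  have e1 : ∑ i : Fin g, -(Real.pi * c) * ((m i : ℝ))^2
      = -(Real.pi * c * ∑ i : Fin g, ((m i : ℝ))^2) := by
    rw [← Finset.mul_sum]; ring
  have e2 : ∑ i : Fin g, (2 * Real.pi * |(u i).im|) * |((m i : ℝ))|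
      = 2 * Real.pi * ∑ i : Fin g, |(u i).im| * |(m i : ℝ)| := by
    rw [Finset.mul_sum]; exact Finset.sum_congr rfl fun i _ => by ring
  rw [e1, e2]
  linarith
end
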